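/- arXiv:math/9904159 — 5 statements merged into one kernel-verified Lean document; each statement's English description precedes it below -/
import Mathlib

section
/- For a simplicial fan $\Delta$, the sheaf $\mathcal{A}$ of piecewise polynomial functions on the fan space is flabby: for every subfan $\Lambda \preceq \Delta$, the restriction map $\mathcal{A}(\Delta) \to \mathcal{A}(\Lambda)$ is surjective. In particular, every piecewise polynomial function on a subfan of a simplicial fan extends to a piecewise polynomial function on the whole fan. -/
open MvPolynomial

/-- The convex polyhedral cone generated by finitely many vectors. -/
def IsPCone {n : ℕ} (σ : Set (Fin n → ℚ)) : Prop :=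
  ∃ (m : ℕ) (v : Fin m → Fin n → ℚ),
    σ = {x | ∃ c : Fin m → ℚ, (∀ i, 0 ≤ c i) ∧ x = ∑ i, c i • v i}

/-- `τ` is a face of the cone `σ`, cut out by a supporting linear form. -/
def IsFaceOf {n : ℕ} (τ σ : Set (Fin n → ℚ)) : Prop :=
  ∃ ℓ : (Fin n → ℚ) →ₗ[ℚ] ℚ, (∀ x ∈ σ, 0 ≤ ℓ x) ∧ τ = {x ∈ σ | ℓ x = 0}

/-- A fan: a finite collection of polyhedral cones, closed under taking faces,
such that any two cones intersect in a common face. -/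
structure IsFan {n : ℕ} (Δ : Set (Set (Fin n → ℚ))) : Prop where
  finite : Δ.Finite
  pcone : ∀ σ ∈ Δ, IsPCone σ
  face_mem : ∀ σ ∈ Δ, ∀ τ, IsFaceOf τ σ → τ ∈ Δ
  inter_face : ∀ σ ∈ Δ, ∀ σ' ∈ Δ, IsFaceOf (σ ∩ σ') σ

/-- A subfan: a subset of the fan closed under taking faces. -/
def IsSubfan {n : ℕ} (Λ Δ : Set (Set (Fin n → ℚ))) : Prop :=
  Λ ⊆ Δ ∧ ∀ σ ∈ Λ, ∀ τ, IsFaceOf τ σ → τ ∈ Λ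

/-- The support of a fan. -/
def supp {n : ℕ} (Δ : Set (Set (Fin n → ℚ))) : Set (Fin n → ℚ) := ⋃ σ ∈ Δ, σ

/-- `f` is a `Δ`-piecewise polynomial function: on each cone of `Δ` it agrees
with a polynomial. -/
def PP {n : ℕ} (Δ : Set (Set (Fin n → ℚ))) (f : (Fin n → ℚ) → ℚ) : Prop :=
  ∀ σ ∈ Δ, ∃ p : MvPolynomial (Fin n) ℚ, ∀ x ∈ σ, f x = eval x p

/-- A simplicial fan: each cone is generated by linearly independent vectors. -/
def IsSimplicial {n : ℕ} (Δ : Set (Set (Fin n → ℚ))) : Prop :=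
  ∀ σ ∈ Δ, ∃ (m : ℕ) (v : Fin m → Fin n → ℚ), LinearIndependent ℚ v ∧
    σ = {x | ∃ c : Fin m → ℚ, (∀ i, 0 ≤ c i) ∧ x = ∑ i, c i • v i}

/-! ### Auxiliary machinery -/

/-- The cone generated by the vectors `v i`, `i ∈ I`. -/
def coneOf {n m : ℕ} (v : Fin m → Fin n → ℚ) (I : Finset (Fin m)) : Set (Fin n → ℚ) :=
  {x | ∃ c : Fin m → ℚ, (∀ i, 0 ≤ c i) ∧ (∀ i ∉ I, c i = 0) ∧ x = ∑ i, c i • v i}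

lemma coneOf_mono {n m : ℕ} (v : Fin m → Fin n → ℚ) {J I : Finset (Fin m)}
    (hJI : J ⊆ I) : coneOf v J ⊆ coneOf v I := by
  rintro x ⟨c, hc, hc0, rfl⟩
  exact ⟨c, hc, fun i hi => hc0 i (fun h => hi (hJI h)), rfl⟩

lemma coneOf_univ {n m : ℕ} (v : Fin m → Fin n → ℚ) :
    coneOf v Finset.univ = {x | ∃ c : Fin m → ℚ, (∀ i, 0 ≤ c i) ∧ x = ∑ i, c i • v i} := by
  ext x
  constructor
  · rintro ⟨c, h1, _, h3⟩; exact ⟨c, h1, h3⟩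
  · rintro ⟨c, h1, h3⟩
    exact ⟨c, h1, fun i hi => absurd (Finset.mem_univ i) hi, h3⟩

lemma exists_dual {n m : ℕ} {v : Fin m → Fin n → ℚ} (hv : LinearIndependent ℚ v) :
    ∃ G : (Fin n → ℚ) →ₗ[ℚ] (Fin m → ℚ), ∀ c : Fin m → ℚ, G (∑ i, c i • v i) = c := by
  set F : (Fin m → ℚ) →ₗ[ℚ] (Fin n → ℚ) :=
    ∑ i, (LinearMap.proj i : (Fin m → ℚ) →ₗ[ℚ] ℚ).smulRight (v i) with hF
  have hFapp : ∀ c, F c = ∑ i, c i • v i := by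
    intro c
    simp [hF, LinearMap.sum_apply]
  have hker : LinearMap.ker F = ⊥ := by
    rw [LinearMap.ker_eq_bot']
    intro c hc
    have h0 : ∑ i, c i • v i = 0 := by rw [← hFapp]; exact hc
    funext i
    exact Fintype.linearIndependent_iff.mp hv c h0 i
  obtain ⟨G, hG⟩ := F.exists_leftInverse_of_injective hker
  refine ⟨G, fun c => ?_⟩
  have := LinearMap.congr_fun hG c
  simpa [hFapp] using this

/-- Projection onto the face spanned by `v i`, `i ∈ I`. -/
noncomputable def projC {n m : ℕ} (v : Fin m → Fin n → ℚ) (G : (Fin n → ℚ) →ₗ[ℚ] (Fin m → ℚ))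
    (I : Finset (Fin m)) (x : Fin n → ℚ) : Fin n → ℚ :=
  ∑ i ∈ I, G x i • v i

section proj
variable {n m : ℕ} {v : Fin m → Fin n → ℚ} {G : (Fin n → ℚ) →ₗ[ℚ] (Fin m → ℚ)}
  (hG : ∀ c : Fin m → ℚ, G (∑ i, c i • v i) = c)

include hG in
lemma proj_eq_self {I : Finset (Fin m)} {x : Fin n → ℚ} (hx : x ∈ coneOf v I) :
    projC v G I x = x := by
  obtain ⟨c, _, hc0, rfl⟩ := hx
  rw [projC]
  have hGc : G (∑ i, c i • v i) = c := hG c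
  rw [hGc]
  exact Finset.sum_subset (Finset.subset_univ I) (fun i _ hi => by rw [hc0 i hi, zero_smul])

include hG in
lemma proj_mem_inter {I J : Finset (Fin m)} {x : Fin n → ℚ} (hx : x ∈ coneOf v J) :
    projC v G I x ∈ coneOf v (I ∩ J) := by
  classical
  obtain ⟨c, hc, hc0, rfl⟩ := hx
  rw [projC, hG c]
  refine ⟨fun i => if i ∈ I then c i else 0, ?_, ?_, ?_⟩
  · intro i
    by_cases h : i ∈ I <;> simp [h, hc i]
  · intro i hi
    simp only [Finset.mem_inter, not_and] at hi
    by_cases h : i ∈ I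
    · simp only [if_pos h]; exact hc0 i (hi h)
    · simp only [if_neg h]
  · symm
    calc ∑ i : Fin m, (if i ∈ I then c i else 0) • v i
        = ∑ i : Fin m, (if i ∈ I then c i • v i else 0) := by
          refine Finset.sum_congr rfl fun i _ => ?_
          by_cases h : i ∈ I <;> simp [h]
      _ = ∑ i ∈ I, c i • v i := by
          rw [Finset.sum_ite_mem, Finset.univ_inter]

lemma face_structure {τ : Set (Fin n → ℚ)} (hτ : IsFaceOf τ (coneOf v Finset.univ)) :
    ∃ I : Finset (Fin m), τ = coneOf v I := by
  classical
  obtain ⟨ℓ, hℓ, rfl⟩ := hτ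
  have hvmem : ∀ i, v i ∈ coneOf v Finset.univ := by
    intro i
    refine ⟨fun j => if j = i then 1 else 0, ?_, ?_, ?_⟩
    · intro j; by_cases h : j = i <;> simp [h]
    · intro j hj; exact absurd (Finset.mem_univ j) hj
    · simp [ite_smul]
  refine ⟨Finset.univ.filter (fun i => ℓ (v i) = 0), ?_⟩
  ext x
  constructor
  · rintro ⟨⟨c, hc, -, rfl⟩, hx0⟩
    have hsum : ∑ i, c i * ℓ (v i) = 0 := by
      rw [← hx0]; simp [map_sum, map_smul, smul_eq_mul]
    have hterm : ∀ i ∈ Finset.univ, 0 ≤ c i * ℓ (v i) :=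
      fun i _ => mul_nonneg (hc i) (hℓ _ (hvmem i))
    have hzero := (Finset.sum_eq_zero_iff_of_nonneg hterm).mp hsum
    refine ⟨c, hc, ?_, rfl⟩
    intro i hi
    simp only [Finset.mem_filter, Finset.mem_univ, true_and] at hi
    have := hzero i (Finset.mem_univ i)
    rcases mul_eq_zero.mp this with h | h
    · exact h
    · exact absurd h hi
  · rintro ⟨c, hc, hc0, rfl⟩
    have hmem : (∑ i, c i • v i) ∈ coneOf v Finset.univ :=
      ⟨c, hc, fun i hi => absurd (Finset.mem_univ i) hi, rfl⟩
    refine ⟨hmem, ?_⟩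
    rw [map_sum]
    refine Finset.sum_eq_zero fun i _ => ?_
    rw [map_smul, smul_eq_mul]
    by_cases hi : ℓ (v i) = 0
    · rw [hi, mul_zero]
    · rw [hc0 i (by simp [hi]), zero_mul]

include hG in
lemma coneOf_face_coneOf {I J : Finset (Fin m)} (hJI : J ⊆ I) :
    IsFaceOf (coneOf v J) (coneOf v I) := by
  classical
  refine ⟨∑ i ∈ I \ J, (LinearMap.proj i).comp G, ?_, ?_⟩
  · rintro x ⟨c, hc, hc0, rfl⟩
    rw [LinearMap.sum_apply]
    refine Finset.sum_nonneg fun i _ => ?_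
    simp only [LinearMap.comp_apply, LinearMap.proj_apply, hG c]
    exact hc i
  · ext x
    constructor
    · rintro ⟨c, hc, hc0, rfl⟩
      refine ⟨⟨c, hc, fun i hi => hc0 i (fun h => hi (hJI h)), rfl⟩, ?_⟩
      rw [LinearMap.sum_apply]
      refine Finset.sum_eq_zero fun i hi => ?_
      simp only [LinearMap.comp_apply, LinearMap.proj_apply, hG c]
      exact hc0 i (Finset.mem_sdiff.mp hi).2
    · rintro ⟨⟨c, hc, hc0, rfl⟩, hx0⟩
      rw [LinearMap.sum_apply] at hx0
      simp only [LinearMap.comp_apply, LinearMap.proj_apply, hG c] at hx0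
      have hzero := (Finset.sum_eq_zero_iff_of_nonneg (fun i _ => hc i)).mp hx0
      refine ⟨c, hc, ?_, rfl⟩
      intro i hi
      by_cases hiI : i ∈ I
      · exact hzero i (Finset.mem_sdiff.mpr ⟨hiI, hi⟩)
      · exact hc0 i hiI
end proj

lemma eval_aeval' {n : ℕ} (x : Fin n → ℚ) (g : Fin n → MvPolynomial (Fin n) ℚ)
    (p : MvPolynomial (Fin n) ℚ) :
    eval x (aeval g p) = eval (fun i => eval x (g i)) p := by
  induction p using MvPolynomial.induction_on with
  | C a => simp
  | add p q hp hq => rw [map_add, map_add, hp, hq, map_add]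
  | mul_X p i hp => simp only [map_mul, aeval_X, eval_X, eval_mul, hp]

/-- The projection `projC v G I`, coordinatewise as polynomials. -/
noncomputable def projPoly {n m : ℕ} (v : Fin m → Fin n → ℚ)
    (G : (Fin n → ℚ) →ₗ[ℚ] (Fin m → ℚ)) (I : Finset (Fin m)) (j : Fin n) :
    MvPolynomial (Fin n) ℚ :=
  ∑ i ∈ I, C (v i j) * ∑ k, C (G (Pi.single k 1) i) * X k

lemma eval_projPoly {n m : ℕ} (v : Fin m → Fin n → ℚ)
    (G : (Fin n → ℚ) →ₗ[ℚ] (Fin m → ℚ)) (I : Finset (Fin m)) (j : Fin n)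
    (x : Fin n → ℚ) : eval x (projPoly v G I j) = projC v G I x j := by
  have hx : x = ∑ k, x k • (Pi.single k 1 : Fin n → ℚ) := by
    funext j
    simp [Finset.sum_apply, Pi.single_apply]
  have hGx : ∀ i, G x i = ∑ k, G (Pi.single k 1) i * x k := by
    intro i
    conv_lhs => rw [hx]
    rw [map_sum]
    simp [Finset.sum_apply, mul_comm]
  rw [projPoly, projC]
  simp only [map_sum, map_mul, eval_C, eval_X, Finset.sum_apply, Pi.smul_apply,
    smul_eq_mul]
  refine Finset.sum_congr rfl fun i _ => ?_
  rw [hGx i, mul_comm]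

lemma eval_proj_comp {n m : ℕ} (v : Fin m → Fin n → ℚ)
    (G : (Fin n → ℚ) →ₗ[ℚ] (Fin m → ℚ)) (I : Finset (Fin m))
    (p : MvPolynomial (Fin n) ℚ) (x : Fin n → ℚ) :
    eval x (aeval (projPoly v G I) p) = eval (projC v G I x) p := by
  rw [eval_aeval',
    show (fun j => eval x (projPoly v G I j)) = projC v G I x from
      funext fun j => eval_projPoly v G I j x]

/-- Key inner induction: a function which is polynomial on each cone of a
downward-closed family of coordinate subcones of a simplicial cone agrees with
a single polynomial on the union of those subcones. -/
lemma extend_on_faces {n m : ℕ} {v : Fin m → Fin n → ℚ}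
    {G : (Fin n → ℚ) →ₗ[ℚ] (Fin m → ℚ)} (hG : ∀ c : Fin m → ℚ, G (∑ i, c i • v i) = c)
    (f : (Fin n → ℚ) → ℚ) :
    ∀ k : ℕ, ∀ S : Finset (Finset (Fin m)), S.card ≤ k →
      (∀ I ∈ S, ∀ J ⊆ I, J ∈ S) →
      (∀ I ∈ S, ∃ p, ∀ x ∈ coneOf v I, f x = eval x p) →
      ∃ q, ∀ I ∈ S, ∀ x ∈ coneOf v I, f x = eval x q := by
  intro k
  induction k with
  | zero =>
    intro S hcard _ _
    rw [Nat.le_zero, Finset.card_eq_zero] at hcard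
    subst hcard
    exact ⟨0, fun I hI => absurd hI (by simp)⟩
  | succ k ih =>
    intro S hcard hdc hpoly
    rcases S.eq_empty_or_nonempty with rfl | hne
    · exact ⟨0, fun I hI => absurd hI (by simp)⟩
    obtain ⟨I, hIS, hImax⟩ := S.exists_maximal hne
    set S' := S.erase I with hS'
    have hS'sub : S' ⊆ S := Finset.erase_subset _ _
    have hdc' : ∀ J ∈ S', ∀ K ⊆ J, K ∈ S' := by
      intro J hJ K hKJ
      have hJS : J ∈ S := hS'sub hJ
      have hKS : K ∈ S := hdc J hJS K hKJ
      refine Finset.mem_erase.mpr ⟨?_, hKS⟩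
      rintro rfl
      exact lt_irrefl _ (lt_of_lt_of_le (lt_of_le_of_ne (Finset.le_iff_subset.mpr hKJ)
        ((Finset.mem_erase.mp hJ).1).symm) (hImax hJS (Finset.le_iff_subset.mpr hKJ)))
    have hcard' : S'.card ≤ k := by
      rw [hS', Finset.card_erase_of_mem hIS]
      have hpos : 0 < S.card := Finset.card_pos.mpr hne
      omega
    obtain ⟨q', hq'⟩ := ih S' hcard' hdc' (fun J hJ => hpoly J (hS'sub hJ))
    obtain ⟨pI, hpI⟩ := hpoly I hIS
    refine ⟨q' + aeval (projPoly v G I) (pI - q'), ?_⟩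
    intro J hJS x hx
    rw [map_add, eval_proj_comp, map_sub]
    by_cases hJI : J = I
    · subst hJI
      rw [proj_eq_self hG hx]
      have h1 := hpI x hx
      ring_nf
      linarith
    · have hJS' : J ∈ S' := Finset.mem_erase.mpr ⟨hJI, hJS⟩
      set y := projC v G I x with hy
      have hymem : y ∈ coneOf v (I ∩ J) := proj_mem_inter hG hx
      have hIJS' : I ∩ J ∈ S' := hdc' J hJS' (I ∩ J) Finset.inter_subset_right
      have hyI : y ∈ coneOf v I := coneOf_mono v Finset.inter_subset_left hymem
      have h1 : eval y pI = f y := (hpI y hyI).symm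
      have h2 : eval y q' = f y := (hq' (I ∩ J) hIJS' y hymem).symm
      have h3 : f x = eval x q' := hq' J hJS' x hx
      rw [h1, h2, h3]
      ring

lemma supp_mono {n : ℕ} {Λ Λ' : Set (Set (Fin n → ℚ))} (h : Λ ⊆ Λ') :
    supp Λ ⊆ supp Λ' := by
  intro x hx
  rw [supp] at hx ⊢
  simp only [Set.mem_iUnion] at hx ⊢
  obtain ⟨τ, hτ, hxτ⟩ := hx
  exact ⟨τ, h hτ, hxτ⟩

lemma key {n : ℕ} {Δ : Set (Set (Fin n → ℚ))} (hΔ : IsFan Δ) (hsimp : IsSimplicial Δ) :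
    ∀ k : ℕ, ∀ Λ : Set (Set (Fin n → ℚ)), (Δ \ Λ).ncard ≤ k → IsSubfan Λ Δ →
      ∀ f, PP Λ f → ∃ g, PP Δ g ∧ ∀ x ∈ supp Λ, g x = f x := by
  intro k
  induction k with
  | zero =>
    intro Λ hcard hΛ f hf
    have hfin : (Δ \ Λ).Finite := hΔ.finite.subset Set.diff_subset
    have hempty : Δ \ Λ = ∅ := (Set.ncard_eq_zero hfin).mp (Nat.le_zero.mp hcard)
    have hΛΔ : Λ = Δ := le_antisymm hΛ.1 (Set.diff_eq_empty.mp hempty)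
    exact ⟨f, hΛΔ ▸ hf, fun x _ => rfl⟩
  | succ k ih =>
    intro Λ hcard hΛ f hf
    classical
    by_cases hsub : Δ ⊆ Λ
    · have hΛΔ : Λ = Δ := le_antisymm hΛ.1 hsub
      exact ⟨f, hΛΔ ▸ hf, fun x _ => rfl⟩
    have hne : (Δ \ Λ).Nonempty := Set.diff_nonempty.mpr hsub
    have hfin : (Δ \ Λ).Finite := hΔ.finite.subset Set.diff_subset
    obtain ⟨σ, hσ, hσmin⟩ := hfin.exists_minimal hne
    obtain ⟨hσΔ, hσΛ⟩ := hσ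
    obtain ⟨m, v, hv, hσe⟩ := hsimp σ hσΔ
    obtain ⟨G, hG⟩ := exists_dual hv
    have hσcone : σ = coneOf v Finset.univ := by rw [coneOf_univ]; exact hσe
    set S : Finset (Finset (Fin m)) := Finset.univ.filter (fun I => coneOf v I ∈ Λ)
      with hS
    have hdc : ∀ I ∈ S, ∀ J ⊆ I, J ∈ S := by
      intro I hI J hJI
      simp only [hS, Finset.mem_filter, Finset.mem_univ, true_and] at hI ⊢
      exact hΛ.2 _ hI _ (coneOf_face_coneOf hG hJI)
    have hpoly : ∀ I ∈ S, ∃ p, ∀ x ∈ coneOf v I, f x = eval x p := by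
      intro I hI
      simp only [hS, Finset.mem_filter, Finset.mem_univ, true_and] at hI
      exact hf _ hI
    obtain ⟨q, hq⟩ := extend_on_faces hG f S.card S le_rfl hdc hpoly
    have hkey : ∀ x ∈ σ ∩ supp Λ, f x = eval x q := by
      rintro x ⟨hxσ, hxs⟩
      rw [supp] at hxs
      simp only [Set.mem_iUnion] at hxs
      obtain ⟨τ, hτΛ, hxτ⟩ := hxs
      have hτΔ := hΛ.1 hτΛ
      have hfc : IsFaceOf (σ ∩ τ) (coneOf v Finset.univ) := by
        rw [← hσcone]; exact hΔ.inter_face σ hσΔ τ hτΔ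
      obtain ⟨I, hI⟩ := face_structure hfc
      have hmemΛ : coneOf v I ∈ Λ := by
        rw [← hI, Set.inter_comm]
        exact hΛ.2 τ hτΛ _ (hΔ.inter_face τ hτΔ σ hσΔ)
      have hIS : I ∈ S := by
        simp only [hS, Finset.mem_filter, Finset.mem_univ, true_and]
        exact hmemΛ
      have hxI : x ∈ coneOf v I := by rw [← hI]; exact ⟨hxσ, hxτ⟩
      exact hq I hIS x hxI
    set g' : (Fin n → ℚ) → ℚ := fun x => if x ∈ σ then eval x q else f x with hg'
    have hagree : ∀ x ∈ supp Λ, g' x = f x := by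
      intro x hx
      by_cases hxσ : x ∈ σ
      · simp only [hg', if_pos hxσ]
        exact (hkey x ⟨hxσ, hx⟩).symm
      · simp only [hg', if_neg hxσ]
    set Λ' : Set (Set (Fin n → ℚ)) := insert σ Λ with hΛ'def
    have hΛ' : IsSubfan Λ' Δ := by
      constructor
      · rw [hΛ'def]
        exact Set.insert_subset hσΔ hΛ.1
      · intro ρ hρ τ hτface
        rw [hΛ'def] at hρ
        rcases Set.mem_insert_iff.mp hρ with rfl | hρΛ
        · have hτΔ : τ ∈ Δ := hΔ.face_mem ρ hσΔ τ hτface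
          have hτρ : τ ⊆ ρ := by
            obtain ⟨ℓ, -, rfl⟩ := hτface
            exact Set.sep_subset _ _
          by_cases hτσ : τ = ρ
          · rw [hτσ, hΛ'def]; exact Set.mem_insert _ _
          · rw [hΛ'def]
            refine Set.mem_insert_iff.mpr (Or.inr ?_)
            by_contra hτΛ
            exact hτσ (le_antisymm hτρ (hσmin ⟨hτΔ, hτΛ⟩ hτρ))
        · rw [hΛ'def]
          exact Set.mem_insert_iff.mpr (Or.inr (hΛ.2 ρ hρΛ τ hτface))
    have hPP' : PP Λ' g' := by
      intro ρ hρ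
      rw [hΛ'def] at hρ
      rcases Set.mem_insert_iff.mp hρ with rfl | hρΛ
      · exact ⟨q, fun x hx => by simp only [hg', if_pos hx]⟩
      · obtain ⟨p, hp⟩ := hf ρ hρΛ
        refine ⟨p, fun x hx => ?_⟩
        have hxs : x ∈ supp Λ := by
          rw [supp]
          simp only [Set.mem_iUnion]
          exact ⟨ρ, hρΛ, hx⟩
        rw [hagree x hxs]
        exact hp x hx
    have hcard' : (Δ \ Λ').ncard ≤ k := by
      have hdiff : Δ \ Λ' = (Δ \ Λ) \ {σ} := by
        rw [hΛ'def]
        ext x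
        simp only [Set.mem_diff, Set.mem_insert_iff, Set.mem_singleton_iff]
        tauto
      rw [hdiff]
      have := Set.ncard_diff_singleton_lt_of_mem (show σ ∈ Δ \ Λ from ⟨hσΔ, hσΛ⟩) hfin
      omega
    obtain ⟨g, hg, hgg'⟩ := ih Λ' hcard' hΛ' g' hPP'
    refine ⟨g, hg, fun x hx => ?_⟩
    rw [hgg' x (supp_mono (by rw [hΛ'def]; exact Set.subset_insert _ _) hx),
      hagree x hx]

/-- For a simplicial fan `Δ`, the sheaf `𝒜` of piecewise polynomial functions
is flabby: every piecewise polynomial function on a subfan `Λ` of `Δ` extends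
to a piecewise polynomial function on all of `Δ`. -/
theorem stmt_8 (n : ℕ) (Δ : Set (Set (Fin n → ℚ))) (hΔ : IsFan Δ)
    (hsimp : IsSimplicial Δ)
    (Λ : Set (Set (Fin n → ℚ))) (hΛ : IsSubfan Λ Δ)
    (f : (Fin n → ℚ) → ℚ) (hf : PP Λ f) :
    ∃ g, PP Δ g ∧ ∀ x ∈ supp Λ, g x = f x :=
  key hΔ hsimp (Δ \ Λ).ncard Λ le_rfl hΛ f hf
end

section
/- Let $\Delta$ be a complete simplicial fan in $V = \mathbb{Q}^n$ with set of rays $\Delta^1$. The $\mathbb{Q}$-algebra homomorphism from the polynomial ring $\mathbb{Q}[t_\rho : \rho \in \Delta^1]$ to the algebra $\mathcal{A}(\Delta)$ of piecewise polynomial functions, sending each generator $t_\rho$ to the unique piecewise linear function taking value $1$ at the primitive generator $v_\rho$ of $\rho$ and vanishing on all other rays, is surjective with kernel equal to the Stanley–Reisner ideal $I = \langle \prod_{j=1}^k t_{\rho_j} : \rho_1 + \dots + \rho_k \notin \Delta \rangle$. Hence the Stanley–Reisner ring $\mathbb{Q}[\Delta^1]/I$ is isomorphic to $\mathcal{A}(\Delta)$.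 -/
open MvPolynomial

namespace SR9

variable {n R : ℕ}

def coneOf (v : Fin R → Fin n → ℚ) (s : Finset (Fin R)) : Set (Fin n → ℚ) :=
  {x | ∃ c : Fin R → ℚ, (∀ i, 0 ≤ c i) ∧ (∀ i, i ∉ s → c i = 0) ∧ x = ∑ i, c i • v i}

lemma sum_mem_coneOf {v : Fin R → Fin n → ℚ} {s} {c : Fin R → ℚ} (h0 : ∀ i, 0 ≤ c i)
    (hs : ∀ i, i ∉ s → c i = 0) : (∑ i, c i • v i) ∈ coneOf v s := ⟨c, h0, hs, rfl⟩

lemma coneOf_mono {v : Fin R → Fin n → ℚ} {s s' : Finset (Fin R)} (h : s ⊆ s') :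
    coneOf v s ⊆ coneOf v s' := by
  rintro x ⟨c, h0, hz, rfl⟩
  exact ⟨c, h0, fun i hi => hz i (fun h' => hi (h h')), rfl⟩

lemma v_mem_coneOf {v : Fin R → Fin n → ℚ} {s} {i} (hi : i ∈ s) : v i ∈ coneOf v s := by
  refine ⟨fun k => if k = i then 1 else 0, ?_, ?_, ?_⟩
  · intro k; dsimp only; split <;> norm_num
  · intro k hk; simp only [ite_eq_right_iff]; rintro rfl; exact absurd hi hk
  · simp [ite_smul]

variable {Δ : Set (Set (Fin n → ℚ))} {v : Fin R → Fin n → ℚ} {t : Fin R → (Fin n → ℚ) → ℚ}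

/-- `t j` computes the `j`-th coordinate on any cone of the fan. -/
lemma tval (ht_lin : ∀ i, ∀ σ ∈ Δ, ∃ ℓ : (Fin n → ℚ) →ₗ[ℚ] ℚ, ∀ x ∈ σ, t i x = ℓ x)
    (ht_val : ∀ i j, t i (v j) = if i = j then 1 else 0)
    {σ S} (hσ : σ ∈ Δ) (hS : σ = coneOf v S) {c : Fin R → ℚ} (h0 : ∀ i, 0 ≤ c i)
    (hs : ∀ i, i ∉ S → c i = 0) (j : Fin R) : t j (∑ i, c i • v i) = c j := by
  obtain ⟨ℓ, hℓ⟩ := ht_lin j σ hσ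
  have hxσ : (∑ i, c i • v i) ∈ σ := hS ▸ sum_mem_coneOf h0 hs
  rw [hℓ _ hxσ, map_sum]
  have : ∀ i, ℓ (c i • v i) = c i * t j (v i) := by
    intro i
    by_cases hi : i ∈ S
    · rw [map_smul, smul_eq_mul, hℓ _ (hS ▸ v_mem_coneOf hi)]
    · rw [hs i hi]; simp
  rw [Finset.sum_congr rfl fun i _ => this i]
  simp [ht_val, mul_ite, Finset.sum_ite_eq]

lemma t_zero (ht_lin : ∀ i, ∀ σ ∈ Δ, ∃ ℓ : (Fin n → ℚ) →ₗ[ℚ] ℚ, ∀ x ∈ σ, t i x = ℓ x)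
    (ht_val : ∀ i j, t i (v j) = if i = j then 1 else 0)
    {σ S} (hσ : σ ∈ Δ) (hS : σ = coneOf v S) {x} (hx : x ∈ σ) {j} (hj : j ∉ S) :
    t j x = 0 := by
  obtain ⟨c, h0, hz, rfl⟩ := hS ▸ hx
  rw [tval ht_lin ht_val hσ hS h0 hz j]; exact hz j hj

lemma t_nonneg (ht_lin : ∀ i, ∀ σ ∈ Δ, ∃ ℓ : (Fin n → ℚ) →ₗ[ℚ] ℚ, ∀ x ∈ σ, t i x = ℓ x)
    (ht_val : ∀ i j, t i (v j) = if i = j then 1 else 0)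
    {σ S} (hσ : σ ∈ Δ) (hS : σ = coneOf v S) {x} (hx : x ∈ σ) (j : Fin R) :
    0 ≤ t j x := by
  obtain ⟨c, h0, hz, rfl⟩ := hS ▸ hx
  rw [tval ht_lin ht_val hσ hS h0 hz j]; exact h0 j

lemma t_repr (ht_lin : ∀ i, ∀ σ ∈ Δ, ∃ ℓ : (Fin n → ℚ) →ₗ[ℚ] ℚ, ∀ x ∈ σ, t i x = ℓ x)
    (ht_val : ∀ i j, t i (v j) = if i = j then 1 else 0)
    {σ S} (hσ : σ ∈ Δ) (hS : σ = coneOf v S) {x} (hx : x ∈ σ) :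
    x = ∑ i, t i x • v i := by
  obtain ⟨c, h0, hz, rfl⟩ := hS ▸ hx
  refine Finset.sum_congr rfl fun i _ => ?_
  rw [tval ht_lin ht_val hσ hS h0 hz i]

/-- sub-Finsets of a cone description give faces, which are cones of the fan. -/
lemma coneOf_subset_mem (hΔ : IsFan Δ)
    (ht_lin : ∀ i, ∀ σ ∈ Δ, ∃ ℓ : (Fin n → ℚ) →ₗ[ℚ] ℚ, ∀ x ∈ σ, t i x = ℓ x)
    (ht_val : ∀ i j, t i (v j) = if i = j then 1 else 0)
    {σ S} (hσ : σ ∈ Δ) (hS : σ = coneOf v S) {s : Finset (Fin R)} (hsub : s ⊆ S) :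
    coneOf v s ∈ Δ := by
  classical
  choose ℓ hℓ using fun i => ht_lin i σ hσ
  refine hΔ.face_mem σ hσ _ ⟨∑ i ∈ S \ s, ℓ i, ?_, ?_⟩
  · intro x hx
    rw [LinearMap.sum_apply]
    refine Finset.sum_nonneg fun i _ => ?_
    rw [← hℓ i x hx]
    exact t_nonneg ht_lin ht_val hσ hS hx i
  · ext x
    simp only [LinearMap.sum_apply, Set.mem_setOf_eq]
    constructor
    · rintro ⟨c, h0, hz, rfl⟩
      have hz' : ∀ i, i ∉ S → c i = 0 := fun i hi => hz i (fun h => hi (hsub h))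
      have hxσ : (∑ i, c i • v i) ∈ σ := hS ▸ sum_mem_coneOf h0 hz'
      refine ⟨hxσ, ?_⟩
      refine Finset.sum_eq_zero fun i hi => ?_
      rw [← hℓ i _ hxσ, tval ht_lin ht_val hσ hS h0 hz' i]
      exact hz i (Finset.mem_sdiff.mp hi).2
    · rintro ⟨hxσ, hzero⟩
      obtain ⟨c, h0, hz, rfl⟩ := hS ▸ hxσ
      have hti : ∀ i ∈ S \ s, c i = 0 := by
        have h1 : ∀ i ∈ S \ s, ℓ i (∑ k, c k • v k) = c i := by
          intro i _
          rw [← hℓ i _ hxσ, tval ht_lin ht_val hσ hS h0 hz i]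
        rw [Finset.sum_congr rfl h1] at hzero
        intro i hi
        exact (Finset.sum_eq_zero_iff_of_nonneg fun k _ => h0 k).mp hzero i hi
      refine ⟨c, h0, fun i hi => ?_, rfl⟩
      by_cases hiS : i ∈ S
      · exact hti i (Finset.mem_sdiff.mpr ⟨hiS, hi⟩)
      · exact hz i hiS

lemma coneOf_descr_unique
    (ht_lin : ∀ i, ∀ σ ∈ Δ, ∃ ℓ : (Fin n → ℚ) →ₗ[ℚ] ℚ, ∀ x ∈ σ, t i x = ℓ x)
    (ht_val : ∀ i j, t i (v j) = if i = j then 1 else 0)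
    {σ S T} (hσ : σ ∈ Δ) (h1 : σ = coneOf v S) (h2 : σ = coneOf v T) : S = T := by
  have key : ∀ S T : Finset (Fin R), σ = coneOf v S → σ = coneOf v T → S ⊆ T := by
    intro S T h1 h2 i hi
    by_contra hiT
    have hvσ : v i ∈ σ := h1 ▸ v_mem_coneOf hi
    have := t_zero ht_lin ht_val hσ h2 hvσ hiT
    rw [ht_val i i] at this
    simp at this
  exact le_antisymm (key S T h1 h2) (key T S h2 h1)

lemma exists_descr (hΔ : IsFan Δ) (hsimp : IsSimplicial Δ)
    (hray_all : ∀ σ ∈ Δ, Module.finrank ℚ (Submodule.span ℚ σ) = 1 →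
      ∃ i, σ = {x | ∃ c : ℚ, 0 ≤ c ∧ x = c • v i})
    {σ} (hσ : σ ∈ Δ) : ∃ S, σ = coneOf v S := by
  classical
  obtain ⟨m, w, hw, hσw⟩ := hsimp σ hσ
  have hwinj : Function.Injective w := hw.injective
  set hs := (linearIndepOn_id_range_iff hw.injective).mpr hw with hs_def
  set B := Module.Basis.extend hs with hB
  have hwmem : ∀ k, w k ∈ hs.extend (Set.subset_univ _) :=
    fun k => Module.Basis.subset_extend hs ⟨k, rfl⟩
  set idx : Fin m → hs.extend (Set.subset_univ _) := fun k => ⟨w k, hwmem k⟩ with hidx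
  have hBidx : ∀ k, B (idx k) = w k := fun k => Module.Basis.extend_apply_self hs (idx k)
  have hidx_inj : Function.Injective idx := by
    intro k l h
    exact hwinj (congrArg Subtype.val h)
  have hcoord : ∀ j k, (B.coord (idx j)) (w k) = if k = j then 1 else 0 := by
    intro j k
    rw [← hBidx k, Module.Basis.coord_apply, Module.Basis.repr_self_apply]
    by_cases h : k = j
    · subst h; simp
    · rw [if_neg h, if_neg (fun hh => h (hidx_inj hh))]
  -- the supporting functional for the ray through `w k`
  set ℓ : Fin m → ((Fin n → ℚ) →ₗ[ℚ] ℚ) :=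
    fun k => ∑ j ∈ Finset.univ.erase k, B.coord (idx j) with hℓdef
  have hℓw : ∀ k l, (ℓ k) (w l) = if l = k then 0 else 1 := by
    intro k l
    rw [hℓdef]
    simp only [LinearMap.sum_apply]
    rw [Finset.sum_congr rfl fun j _ => hcoord j l]
    by_cases h : l = k
    · subst h
      rw [if_pos rfl, Finset.sum_eq_zero]
      intro j hj
      rw [if_neg]
      exact fun hh => (Finset.mem_erase.mp hj).1 hh.symm
    · rw [if_neg h, Finset.sum_eq_single l]
      · rw [if_pos rfl]
      · intro j hj hjl; rw [if_neg (fun hh => hjl hh.symm)]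
      · intro hl; exact absurd (Finset.mem_erase.mpr ⟨h, Finset.mem_univ l⟩) hl
  have hray_face : ∀ k, ({x | ∃ c : ℚ, 0 ≤ c ∧ x = c • w k} : Set (Fin n → ℚ)) ∈ Δ := by
    intro k
    refine hΔ.face_mem σ hσ _ ⟨ℓ k, ?_, ?_⟩
    · rintro x hx
      rw [hσw] at hx
      obtain ⟨a, ha0, rfl⟩ := hx
      rw [map_sum]
      refine Finset.sum_nonneg fun l _ => ?_
      rw [map_smul, smul_eq_mul, hℓw k l]
      by_cases h : l = k
      · simp [h]
      · rw [if_neg h, mul_one]; exact ha0 l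
    · ext x
      simp only [Set.mem_setOf_eq]
      constructor
      · rintro ⟨c, hc0, rfl⟩
        refine ⟨?_, ?_⟩
        · rw [hσw]
          refine ⟨fun l => if l = k then c else 0, fun l => by dsimp; split <;> simp [hc0], ?_⟩
          have hterm : ∀ l : Fin m, (if l = k then c else 0) • w l
              = if l = k then c • w k else 0 := by
            intro l
            by_cases h : l = k
            · subst h; rw [if_pos rfl, if_pos rfl]
            · rw [if_neg h, if_neg h, zero_smul]
          rw [Finset.sum_congr rfl fun l _ => hterm l,
            Finset.sum_ite_eq' Finset.univ k (fun _ => c • w k), if_pos (Finset.mem_univ k)]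
        · rw [map_smul, smul_eq_mul, hℓw k k, if_pos rfl, mul_zero]
      · rintro ⟨hxσ, hx0⟩
        rw [hσw] at hxσ
        obtain ⟨a, ha0, rfl⟩ := hxσ
        rw [map_sum] at hx0
        have hterm : ∀ l, (ℓ k) (a l • w l) = if l = k then 0 else a l := by
          intro l
          rw [map_smul, smul_eq_mul, hℓw k l]
          by_cases h : l = k <;> simp [h]
        rw [Finset.sum_congr rfl fun l _ => hterm l] at hx0
        have hz : ∀ l ∈ Finset.univ, (if l = k then 0 else a l) = 0 := by
          refine (Finset.sum_eq_zero_iff_of_nonneg ?_).mp hx0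
          intro l _
          by_cases h : l = k <;> simp [h, ha0 l]
        refine ⟨a k, ha0 k, ?_⟩
        rw [Finset.sum_eq_single k]
        · intro l _ hl
          have := hz l (Finset.mem_univ l)
          rw [if_neg hl] at this
          rw [this, zero_smul]
        · intro h; exact absurd (Finset.mem_univ k) h
  have hwne : ∀ k, w k ≠ 0 := fun k => hw.ne_zero k
  have hspan : ∀ k, Submodule.span ℚ ({x | ∃ c : ℚ, 0 ≤ c ∧ x = c • w k} : Set (Fin n → ℚ))
      = Submodule.span ℚ {w k} := by
    intro k
    refine le_antisymm (Submodule.span_le.mpr ?_) (Submodule.span_le.mpr ?_)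
    · rintro x ⟨c, _, rfl⟩
      exact Submodule.smul_mem _ c (Submodule.subset_span rfl)
    · rintro x rfl
      exact Submodule.subset_span ⟨1, zero_le_one, (one_smul _ _).symm⟩
  have hray1 : ∀ k, ∃ i, ({x | ∃ c : ℚ, 0 ≤ c ∧ x = c • w k} : Set (Fin n → ℚ))
      = {x | ∃ c : ℚ, 0 ≤ c ∧ x = c • v i} := by
    intro k
    refine hray_all _ (hray_face k) ?_
    rw [hspan k]
    exact finrank_span_singleton (hwne k)
  choose ι hι using hray1
  have hwk : ∀ k, ∃ ck : ℚ, 0 < ck ∧ w k = ck • v (ι k) := by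
    intro k
    have : w k ∈ ({x | ∃ c : ℚ, 0 ≤ c ∧ x = c • v (ι k)} : Set (Fin n → ℚ)) := by
      rw [← hι k]; exact ⟨1, zero_le_one, (one_smul _ _).symm⟩
    obtain ⟨c, hc0, hc⟩ := this
    refine ⟨c, ?_, hc⟩
    rcases hc0.lt_or_eq with h | h
    · exact h
    · exfalso; apply hwne k; rw [hc, ← h, zero_smul]
  have hvk : ∀ k, ∃ dk : ℚ, 0 ≤ dk ∧ v (ι k) = dk • w k := by
    intro k
    have : v (ι k) ∈ ({x | ∃ c : ℚ, 0 ≤ c ∧ x = c • w k} : Set (Fin n → ℚ)) := by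
      rw [hι k]; exact ⟨1, zero_le_one, (one_smul _ _).symm⟩
    exact this
  choose ck hck0 hckw using hwk
  choose dk hdk0 hdkv using hvk
  have hι_inj : Function.Injective ι := by
    intro k l hkl
    by_contra hne
    have hwl : w k = (ck k * dk l) • w l := by
      rw [hckw k, hkl, hdkv l, smul_smul]
    have := Fintype.linearIndependent_iff.mp hw
      (fun j => if j = k then 1 else if j = l then -(ck k * dk l) else 0) ?_ k
    · rw [if_pos rfl] at this; exact one_ne_zero this
    · have hsplit : ∀ j, (if j = k then (1:ℚ) else if j = l then -(ck k * dk l) else 0) • w j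
          = (if j = k then w k else 0) + (if j = l then (-(ck k * dk l)) • w l else 0) := by
        intro j
        by_cases hjk : j = k
        · subst hjk; rw [if_pos rfl, if_pos rfl, if_neg hne, one_smul, add_zero]
        · rw [if_neg hjk, if_neg hjk]
          by_cases hjl : j = l
          · subst hjl; rw [if_pos rfl, if_pos rfl, zero_add]
          · rw [if_neg hjl, if_neg hjl, zero_smul, add_zero]
      rw [Finset.sum_congr rfl fun j _ => hsplit j, Finset.sum_add_distrib,
        Finset.sum_ite_eq' Finset.univ k (fun _ => w k),
        Finset.sum_ite_eq' Finset.univ l (fun _ => (-(ck k * dk l)) • w l)]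
      rw [if_pos (Finset.mem_univ k), if_pos (Finset.mem_univ l), neg_smul, ← hwl]
      simp
  refine ⟨Finset.image ι Finset.univ, ?_⟩
  ext x
  constructor
  · intro hx
    rw [hσw] at hx
    obtain ⟨a, ha0, rfl⟩ := hx
    set c : Fin R → ℚ := fun i => ∑ k ∈ Finset.univ.filter (fun k => ι k = i), a k * ck k with hc
    refine ⟨c, ?_, ?_, ?_⟩
    · intro i
      exact Finset.sum_nonneg fun k _ => mul_nonneg (ha0 k) (hck0 k).le
    · intro i hi
      refine Finset.sum_eq_zero fun k hk => ?_
      exact absurd (Finset.mem_image.mpr ⟨k, Finset.mem_univ k, (Finset.mem_filter.mp hk).2⟩) hi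
    · rw [hc]
      simp only [Finset.sum_smul]
      symm
      calc ∑ x : Fin R, ∑ k ∈ Finset.univ.filter (fun k => ι k = x), (a k * ck k) • v x
          = ∑ x : Fin R, ∑ k ∈ Finset.univ.filter (fun k => ι k = x), (a k * ck k) • v (ι k) := by
            refine Finset.sum_congr rfl fun x _ => Finset.sum_congr rfl fun k hk => ?_
            rw [(Finset.mem_filter.mp hk).2]
        _ = ∑ k, (a k * ck k) • v (ι k) :=
            Finset.sum_fiberwise_of_maps_to (fun k _ => Finset.mem_univ (ι k)) _
        _ = ∑ k, a k • w k := by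
            refine Finset.sum_congr rfl fun k _ => ?_
            rw [hckw k, smul_smul]
  · rintro ⟨c, h0, hz, rfl⟩
    rw [hσw]
    refine ⟨fun k => c (ι k) * dk k, fun k => mul_nonneg (h0 _) (hdk0 k), ?_⟩
    have : ∑ i, c i • v i = ∑ i ∈ Finset.image ι Finset.univ, c i • v i := by
      refine (Finset.sum_subset (Finset.subset_univ _) ?_).symm
      intro i _ hi
      rw [hz i hi, zero_smul]
    rw [this, Finset.sum_image (fun k _ l _ h => hι_inj h)]
    refine Finset.sum_congr rfl fun k _ => ?_
    rw [hdkv k, smul_smul]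
lemma eval_bind₁' (c : Fin R → ℚ) (g : Fin R → MvPolynomial (Fin R) ℚ)
    (p : MvPolynomial (Fin R) ℚ) :
    eval c (bind₁ g p) = eval (fun i => eval c (g i)) p :=
  eval₂Hom_bind₁ _ _ _ _

lemma eval_bind₁'' {σ τ : Type*} (c : τ → ℚ) (g : σ → MvPolynomial τ ℚ)
    (p : MvPolynomial σ ℚ) :
    eval c (bind₁ g p) = eval (fun i => eval c (g i)) p :=
  eval₂Hom_bind₁ _ _ _ _

/-- masking of a function -/
noncomputable def maskF (s : Finset (Fin R)) (c : Fin R → ℚ) : Fin R → ℚ :=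
  fun i => if i ∈ s then c i else 0

/-- masking of a polynomial: substitute `0` for variables outside `s`. -/
noncomputable def maskP (s : Finset (Fin R)) (p : MvPolynomial (Fin R) ℚ) :
    MvPolynomial (Fin R) ℚ :=
  bind₁ (fun i => if i ∈ s then X i else 0) p

lemma eval_maskP (s : Finset (Fin R)) (p : MvPolynomial (Fin R) ℚ) (c : Fin R → ℚ) :
    eval c (maskP s p) = eval (maskF s c) p := by
  rw [maskP, eval_bind₁']
  have : (fun i => eval c (if i ∈ s then X i else 0)) = maskF s c := by
    funext i
    rw [maskF]
    split
    · rw [eval_X]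
    · rw [map_zero]
  rw [this]

lemma maskP_monomial (s : Finset (Fin R)) (a : Fin R →₀ ℕ) (r : ℚ) :
    maskP s (monomial a r) = if a.support ⊆ s then monomial a r else 0 := by
  classical
  rw [maskP, bind₁_monomial]
  split
  · next h =>
    rw [monomial_eq]
    congr 1
    rw [Finsupp.prod]
    refine Finset.prod_congr rfl fun i hi => ?_
    rw [if_pos (h hi)]
  · next h =>
    obtain ⟨i0, hi0s, hi0⟩ := Finset.not_subset.mp h
    rw [Finset.prod_eq_zero hi0s, mul_zero]
    rw [if_neg hi0, zero_pow]
    exact Finsupp.mem_support_iff.mp hi0s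
lemma coeff_maskP (s : Finset (Fin R)) (p : MvPolynomial (Fin R) ℚ) (b : Fin R →₀ ℕ)
    (hb : b.support ⊆ s) : coeff b (maskP s p) = coeff b p := by
  classical
  conv_lhs => rw [p.as_sum]
  rw [maskP, map_sum]
  have : ∀ a ∈ p.support, coeff b (bind₁ (fun i => if i ∈ s then X i else 0) (monomial a (coeff a p)))
      = if a = b then coeff a p else 0 := by
    intro a _
    rw [show bind₁ (fun i => if i ∈ s then X i else 0) (monomial a (coeff a p)) = maskP s (monomial a (coeff a p)) from rfl,
      maskP_monomial]
    split
    · rw [coeff_monomial]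
    · next h =>
      rw [coeff_zero]
      split
      · next hab =>
        subst hab; exact absurd hb h
      · rfl
  rw [coeff_sum, Finset.sum_congr rfl this]
  by_cases hbp : b ∈ p.support
  · rw [Finset.sum_eq_single_of_mem b hbp]
    · rw [if_pos rfl]
    · intro a _ hab; rw [if_neg hab]
  · rw [Finset.sum_eq_zero, eq_comm]
    · exact notMem_support_iff.mp hbp
    · intro a ha
      rw [if_neg]
      rintro rfl
      exact hbp ha

/-- A polynomial vanishing on the nonnegative orthant vanishes. -/
lemma eq_zero_of_orthant (p : MvPolynomial (Fin R) ℚ)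
    (h : ∀ c : Fin R → ℚ, (∀ i, 0 ≤ c i) → eval c p = 0) : p = 0 := by
  classical
  set sq : MvPolynomial (Fin R) ℚ := bind₁ (fun i => X i * X i) p with hsq
  have hsq0 : sq = 0 := by
    refine MvPolynomial.funext fun c => ?_
    rw [map_zero, hsq, eval_bind₁']
    refine h _ fun i => ?_
    simp only [map_mul, eval_X]
    exact mul_self_nonneg _
  have hmono : ∀ (a : Fin R →₀ ℕ) (r : ℚ),
      bind₁ (fun i => X i * X i) (monomial a r) = monomial (a + a) r := by
    intro a r
    rw [bind₁_monomial, monomial_eq]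
    congr 1
    rw [Finsupp.prod]
    have hsupp : (a + a).support = a.support := by
      ext i
      simp [Finsupp.mem_support_iff, Nat.add_eq_zero]
    rw [hsupp]
    refine Finset.prod_congr rfl fun i _ => ?_
    rw [Finsupp.add_apply, pow_add, mul_pow]
  ext b
  rw [coeff_zero]
  have : coeff (b + b) sq = coeff b p := by
    conv_lhs => rw [hsq, p.as_sum, map_sum]
    rw [coeff_sum]
    have hterm : ∀ a ∈ p.support,
        coeff (b + b) (bind₁ (fun i => X i * X i) (monomial a (coeff a p)))
        = if a = b then coeff a p else 0 := by
      intro a _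
      rw [hmono, coeff_monomial]
      congr 1
      simp only [eq_iff_iff]
      constructor
      · intro hab
        ext i
        have := congrArg (fun f : Fin R →₀ ℕ => f i) hab
        simp only [Finsupp.add_apply] at this
        omega
      · rintro rfl; rfl
    rw [Finset.sum_congr rfl hterm]
    by_cases hbp : b ∈ p.support
    · rw [Finset.sum_eq_single_of_mem b hbp]
      · rw [if_pos rfl]
      · intro a _ hab; rw [if_neg hab]
    · rw [Finset.sum_eq_zero, eq_comm]
      · exact notMem_support_iff.mp hbp
      · intro a ha
        rw [if_neg]
        rintro rfl
        exact hbp ha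
  rw [← this, hsq0, coeff_zero]

/-- product of variables divides a monomial whose exponent is supported there -/
lemma prod_X_dvd_monomial (s : Finset (Fin R)) : ∀ (a : Fin R →₀ ℕ) (r : ℚ),
    (∀ i ∈ s, a i ≠ 0) →
    (∏ i ∈ s, (X i : MvPolynomial (Fin R) ℚ)) ∣ monomial a r := by
  classical
  induction s using Finset.induction with
  | empty =>
    intro a r _
    rw [Finset.prod_empty]
    exact one_dvd _
  | @insert i s his ih =>
    intro a r h
    rw [Finset.prod_insert his]
    have hi : a i ≠ 0 := h i (Finset.mem_insert_self i s)
    have ha : a = Finsupp.single i 1 + (a - Finsupp.single i 1) := by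
      ext j
      rw [Finsupp.add_apply, Finsupp.tsub_apply, Finsupp.single_apply]
      by_cases hj : i = j
      · subst hj
        rw [if_pos rfl]
        omega
      · rw [if_neg hj]
        omega
    have key : monomial a r = X i * monomial (a - Finsupp.single i 1) r := by
      rw [X, monomial_mul, one_mul, ← ha]
    rw [key]
    refine mul_dvd_mul_left _ (ih _ r fun j hj => ?_)
    have hja : a j ≠ 0 := h j (Finset.mem_insert_of_mem hj)
    rw [Finsupp.tsub_apply, Finsupp.single_apply, if_neg]
    · simpa using hja
    · rintro rfl; exact his hj
end SR9
/-- Jurkiewicz–Danilov / Stanley–Reisner description of piecewise polynomial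
functions: for a complete simplicial fan `Δ` with rays generated by the
primitive lattice vectors `v i`, the algebra homomorphism from
`ℚ[t_ρ : ρ ∈ Δ¹]` to functions, sending `t_i` to the unique piecewise linear
function `t i` with `t i (v j) = δ_{ij}`, has image exactly the algebra
`𝒜(Δ)` of piecewise polynomial functions and kernel the Stanley–Reisner ideal,
whence `ℚ[Δ¹]/I ≅ 𝒜(Δ)`. -/
theorem stmt_9 (n R : ℕ) (Δ : Set (Set (Fin n → ℚ))) (hΔ : IsFan Δ)
    (hsimp : IsSimplicial Δ) (hcomplete : supp Δ = Set.univ)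
    -- the vectors `v i` generate the rays of `Δ`
    (v : Fin R → Fin n → ℚ)
    (hray : ∀ i, ({x | ∃ c : ℚ, 0 ≤ c ∧ x = c • v i} : Set (Fin n → ℚ)) ∈ Δ)
    (hray_all : ∀ σ ∈ Δ, Module.finrank ℚ (Submodule.span ℚ σ) = 1 →
      ∃ i, σ = {x | ∃ c : ℚ, 0 ≤ c ∧ x = c • v i})
    (hinj : Function.Injective v)
    -- each `v i` is a primitive lattice vector
    (hint : ∀ i j, ∃ z : ℤ, v i j = (z : ℚ))
    (hprim : ∀ i, ∀ q : ℚ, 0 < q → (∀ j, ∃ z : ℤ, q * v i j = (z : ℚ)) → 1 ≤ q)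
    -- the piecewise linear "Courant" functions `t i`
    (t : Fin R → (Fin n → ℚ) → ℚ)
    (ht_lin : ∀ i, ∀ σ ∈ Δ, ∃ ℓ : (Fin n → ℚ) →ₗ[ℚ] ℚ, ∀ x ∈ σ, t i x = ℓ x)
    (ht_val : ∀ i j, t i (v j) = if i = j then 1 else 0) :
    -- the homomorphism `P ↦ (x ↦ P((t i x)_i))` maps into `𝒜(Δ)` …
    (∀ P : MvPolynomial (Fin R) ℚ, PP Δ (fun x => eval (fun i => t i x) P)) ∧
    -- … is surjective onto `𝒜(Δ)` …
    (∀ f, PP Δ f → ∃ P : MvPolynomial (Fin R) ℚ,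
      f = fun x => eval (fun i => t i x) P) ∧
    -- … and its kernel is the Stanley–Reisner ideal `I`.
    (∀ P : MvPolynomial (Fin R) ℚ,
      (fun x => eval (fun i => t i x) P) = 0 ↔
        P ∈ Ideal.span {Q | ∃ s : Finset (Fin R),
          ({x | ∃ c : Fin R → ℚ, (∀ i, 0 ≤ c i) ∧ (∀ i, i ∉ s → c i = 0) ∧
              x = ∑ i, c i • v i} : Set (Fin n → ℚ)) ∉ Δ ∧
          Q = ∏ i ∈ s, X i}) := by
  classical
  -- chosen ray description of each cone
  have hdescr : ∀ σ ∈ Δ, ∃ S, σ = SR9.coneOf v S :=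
    fun σ hσ => SR9.exists_descr hΔ hsimp hray_all hσ
  choose Sd0 hSd0 using hdescr
  set Sdf : Set (Fin n → ℚ) → Finset (Fin R) :=
    fun σ => if h : σ ∈ Δ then Sd0 σ h else ∅ with hSdf_def
  have hSdf : ∀ σ (h : σ ∈ Δ), σ = SR9.coneOf v (Sdf σ) := by
    intro σ h
    rw [hSdf_def]
    dsimp only
    rw [dif_pos h]
    exact hSd0 σ h
  have hxmem : ∀ x : Fin n → ℚ, ∃ σ ∈ Δ, x ∈ σ := by
    intro x
    have hx : x ∈ supp Δ := by rw [hcomplete]; trivial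
    simpa [supp, Set.mem_iUnion] using hx
  -- Part 1
  have part1 : ∀ P : MvPolynomial (Fin R) ℚ, PP Δ (fun x => eval (fun i => t i x) P) := by
    intro P σ hσ
    choose ℓ hℓ using fun i => ht_lin i σ hσ
    refine ⟨bind₁ (fun i => ∑ j, C (ℓ i fun k => if j = k then 1 else 0) * X j) P, ?_⟩
    intro x hx
    have hthis : (fun i => eval x (∑ j, C (ℓ i fun k => if j = k then (1:ℚ) else 0) * X j))
        = fun i => t i x := by
      funext i
      rw [map_sum]
      simp only [map_mul, eval_C, eval_X]
      rw [hℓ i x hx, LinearMap.pi_apply_eq_sum_univ (ℓ i) x]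
      exact (Finset.sum_congr rfl fun j _ => by rw [smul_eq_mul, mul_comm]).symm
    show eval (fun i => t i x) P = eval x _
    rw [SR9.eval_bind₁'', hthis]
  -- surjectivity induction
  have key : ∀ f, PP Δ f → ∀ d : ℕ, ∃ P : MvPolynomial (Fin R) ℚ,
      ∀ σ, σ ∈ Δ → (Sdf σ).card < d → ∀ x ∈ σ, f x = eval (fun i => t i x) P := by
    intro f hf d
    induction d with
    | zero => exact ⟨0, fun σ hσ h => absurd h (Nat.not_lt_zero _)⟩
    | succ d ih =>
      obtain ⟨P₀, hP₀⟩ := ih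
      choose p hp using hf
      set pf : Set (Fin n → ℚ) → MvPolynomial (Fin n) ℚ :=
        fun σ => if h : σ ∈ Δ then p σ h else 0 with hpf_def
      have hpf : ∀ σ (h : σ ∈ Δ), ∀ x ∈ σ, f x = eval x (pf σ) := by
        intro σ h
        rw [hpf_def]
        dsimp only
        rw [dif_pos h]
        exact hp σ h
      set q : Set (Fin n → ℚ) → MvPolynomial (Fin R) ℚ := fun σ =>
        bind₁ (fun j : Fin n => ∑ i ∈ Sdf σ, C (v i j) * X i) (pf σ)
          - SR9.maskP (Sdf σ) P₀ with hq_def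
      set F : Finset (Set (Fin n → ℚ)) :=
        (hΔ.finite.subset (Set.sep_subset Δ (fun σ => (Sdf σ).card = d))).toFinset with hF_def
      have hFmem : ∀ σ, σ ∈ F ↔ σ ∈ Δ ∧ (Sdf σ).card = d := by
        intro σ
        rw [hF_def, Set.Finite.mem_toFinset]
        rfl
      have hqA : ∀ σ, σ ∈ Δ → ∀ x ∈ σ,
          eval (fun i => t i x) (q σ) = f x - eval (fun i => t i x) P₀ := by
        intro σ hσ x hx
        rw [hq_def]
        dsimp only
        rw [map_sub]
        have h1 : eval (fun i => t i x)
            (bind₁ (fun j : Fin n => ∑ i ∈ Sdf σ, C (v i j) * X i) (pf σ)) = f x := by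
          rw [SR9.eval_bind₁'']
          have hrepr := SR9.t_repr ht_lin ht_val hσ (hSdf σ hσ) hx
          have hxx : (fun j => eval (fun i => t i x) (∑ i ∈ Sdf σ, C (v i j) * X i)) = x := by
            funext j
            have hxj : x j = ∑ i ∈ Sdf σ, t i x * v i j := by
              conv_lhs => rw [hrepr]
              rw [Finset.sum_apply]
              simp only [Pi.smul_apply, smul_eq_mul]
              symm
              refine Finset.sum_subset (Finset.subset_univ _) ?_
              intro i _ hiS
              rw [SR9.t_zero ht_lin ht_val hσ (hSdf σ hσ) hx hiS, zero_mul]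
            rw [map_sum]
            simp only [map_mul, eval_C, eval_X]
            rw [hxj]
            exact Finset.sum_congr rfl fun i _ => mul_comm _ _
          rw [hxx]
          exact (hpf σ hσ x hx).symm
        have h2 : eval (fun i => t i x) (SR9.maskP (Sdf σ) P₀)
            = eval (fun i => t i x) P₀ := by
          rw [SR9.eval_maskP]
          have hfg : SR9.maskF (Sdf σ) (fun i => t i x) = fun i => t i x := by
            funext i
            simp only [SR9.maskF]
            split
            · rfl
            · next h => exact (SR9.t_zero ht_lin ht_val hσ (hSdf σ hσ) hx h).symm
          rw [hfg]
        rw [h1, h2]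
      have hqB : ∀ σ, σ ∈ F → ∀ τ, τ ∈ Δ → ¬ (Sdf σ ⊆ Sdf τ) →
          ∀ x ∈ τ, eval (fun i => t i x) (q σ) = 0 := by
        intro σ hσF τ hτ hsub x hx
        obtain ⟨hσΔ, hcard⟩ := (hFmem σ).mp hσF
        obtain ⟨i0, hi0S, hi0T⟩ := Finset.not_subset.mp hsub
        set y : Fin R → ℚ := fun i => t i x with hy_def
        have hy0 : ∀ i, 0 ≤ y i :=
          fun i => SR9.t_nonneg ht_lin ht_val hτ (hSdf τ hτ) hx i
        have hyi0 : y i0 = 0 := SR9.t_zero ht_lin ht_val hτ (hSdf τ hτ) hx hi0T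
        set c := SR9.maskF (Sdf σ) y with hc_def
        have heval : eval y (q σ) = eval c (q σ) := by
          rw [hq_def]
          dsimp only
          rw [map_sub, map_sub]
          congr 1
          · rw [SR9.eval_bind₁'', SR9.eval_bind₁'']
            have hfg : (fun j => eval y (∑ i ∈ Sdf σ, C (v i j) * X i))
                = (fun j => eval c (∑ i ∈ Sdf σ, C (v i j) * X i)) := by
              funext j
              rw [map_sum, map_sum]
              refine Finset.sum_congr rfl fun i hi => ?_
              simp only [map_mul, eval_C, eval_X]
              rw [hc_def]
              simp only [SR9.maskF]
              rw [if_pos hi]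
            rw [hfg]
          · rw [SR9.eval_maskP, SR9.eval_maskP]
            have hfg : SR9.maskF (Sdf σ) y = SR9.maskF (Sdf σ) c := by
              funext i
              rw [hc_def]
              simp only [SR9.maskF]
              by_cases h : i ∈ Sdf σ <;> simp [h]
            rw [hfg]
        have hc0 : ∀ i, 0 ≤ c i := by
          intro i
          rw [hc_def]
          simp only [SR9.maskF]
          split
          · exact hy0 i
          · exact le_refl 0
        have hcz : ∀ i, i ∉ (Sdf σ).erase i0 → c i = 0 := by
          intro i hi
          rw [hc_def]
          simp only [SR9.maskF]
          split
          · next hiS =>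
            have hii : i = i0 := by
              by_contra hne
              exact hi (Finset.mem_erase.mpr ⟨hne, hiS⟩)
            rw [hii]
            exact hyi0
          · rfl
        have hczS : ∀ i, i ∉ Sdf σ → c i = 0 :=
          fun i hi => hcz i (fun hmem => hi (Finset.mem_of_mem_erase hmem))
        have hxc_mem : (∑ i, c i • v i) ∈ SR9.coneOf v ((Sdf σ).erase i0) :=
          SR9.sum_mem_coneOf hc0 hcz
        have hτ' : SR9.coneOf v ((Sdf σ).erase i0) ∈ Δ :=
          SR9.coneOf_subset_mem hΔ ht_lin ht_val hσΔ (hSdf σ hσΔ) (Finset.erase_subset _ _)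
        have hxcσ : (∑ i, c i • v i) ∈ σ := by
          rw [hSdf σ hσΔ]
          exact SR9.coneOf_mono (Finset.erase_subset _ _) hxc_mem
        have hSdτ' : Sdf (SR9.coneOf v ((Sdf σ).erase i0)) = (Sdf σ).erase i0 :=
          SR9.coneOf_descr_unique ht_lin ht_val hτ' (hSdf _ hτ') rfl
        have hcard' : ((Sdf σ).erase i0).card < d := by
          have hpos : 0 < d := by
            rw [← hcard]
            exact Finset.card_pos.mpr ⟨i0, hi0S⟩
          rw [Finset.card_erase_of_mem hi0S, hcard]
          omega
        have hIH := hP₀ _ hτ' (by rw [hSdτ']; exact hcard') _ hxc_mem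
        have htxc : (fun j => t j (∑ i, c i • v i)) = c :=
          funext fun j => SR9.tval ht_lin ht_val hσΔ (hSdf σ hσΔ) hc0 hczS j
        have hA := hqA σ hσΔ _ hxcσ
        rw [htxc] at hA hIH
        rw [heval, hA, hIH, sub_self]
      refine ⟨P₀ + ∑ σ ∈ F, q σ, ?_⟩
      intro τ hτ hcard x hx
      rw [map_add, map_sum]
      by_cases hτF : τ ∈ F
      · rw [Finset.sum_eq_single_of_mem τ hτF, hqA τ hτ x hx]
        · ring
        · intro σ hσF hστ
          refine hqB σ hσF τ hτ ?_ x hx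
          intro hsub
          obtain ⟨hσΔ, hcards⟩ := (hFmem σ).mp hσF
          obtain ⟨hτΔ, hcardt⟩ := (hFmem τ).mp hτF
          have hST : Sdf σ = Sdf τ :=
            Finset.eq_of_subset_of_card_le hsub (by rw [hcards, hcardt])
          apply hστ
          rw [hSdf σ hσΔ, hSdf τ hτΔ, hST]
      · have hcard' : (Sdf τ).card < d := by
          rcases Nat.lt_succ_iff_lt_or_eq.mp hcard with h | h
          · exact h
          · exact absurd ((hFmem τ).mpr ⟨hτ, h⟩) hτF
        rw [Finset.sum_eq_zero, add_zero]
        · exact hP₀ τ hτ hcard' x hx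
        · intro σ hσF
          refine hqB σ hσF τ hτ ?_ x hx
          intro hsub
          obtain ⟨hσΔ, hcards⟩ := (hFmem σ).mp hσF
          have hle := Finset.card_le_card hsub
          omega
  -- Part 2
  have part2 : ∀ f, PP Δ f → ∃ P : MvPolynomial (Fin R) ℚ,
      f = fun x => eval (fun i => t i x) P := by
    intro f hf
    obtain ⟨P, hP⟩ := key f hf (R + 1)
    refine ⟨P, funext fun x => ?_⟩
    obtain ⟨σ, hσ, hx⟩ := hxmem x
    refine hP σ hσ ?_ x hx
    have h1 : (Sdf σ).card ≤ R := le_trans (Finset.card_le_univ _) (by simp)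
    omega
  -- the Stanley–Reisner ideal
  set I : Ideal (MvPolynomial (Fin R) ℚ) := Ideal.span {Q | ∃ s : Finset (Fin R),
      SR9.coneOf v s ∉ Δ ∧ Q = ∏ i ∈ s, X i} with hI_def
  have hker_rev : ∀ P ∈ I, ∀ x, eval (fun i => t i x) P = 0 := by
    intro P hP x
    refine Submodule.span_induction ?_ ?_ ?_ ?_ hP
    · rintro Q ⟨s, hsΔ, rfl⟩
      rw [map_prod]
      obtain ⟨σ, hσ, hx⟩ := hxmem x
      have hnsub : ¬ s ⊆ Sdf σ := by
        intro hsub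
        exact hsΔ (SR9.coneOf_subset_mem hΔ ht_lin ht_val hσ (hSdf σ hσ) hsub)
      obtain ⟨i0, hi0s, hi0S⟩ := Finset.not_subset.mp hnsub
      refine Finset.prod_eq_zero hi0s ?_
      rw [eval_X]
      exact SR9.t_zero ht_lin ht_val hσ (hSdf σ hσ) hx hi0S
    · rw [map_zero]
    · intro a b _ _ ha hb
      rw [map_add, ha, hb, add_zero]
    · intro r a _ ha
      rw [smul_eq_mul, map_mul, ha, mul_zero]
  have hker_fwd : ∀ P : MvPolynomial (Fin R) ℚ,
      (∀ x, eval (fun i => t i x) P = 0) → P ∈ I := by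
    intro P hPx
    set Pb := ∑ a ∈ P.support.filter (fun a => SR9.coneOf v a.support ∉ Δ),
      monomial a (coeff a P) with hPb_def
    set Pg := ∑ a ∈ P.support.filter (fun a => ¬ SR9.coneOf v a.support ∉ Δ),
      monomial a (coeff a P) with hPg_def
    have hsplit : P = Pb + Pg := by
      rw [hPb_def, hPg_def, Finset.sum_filter_add_sum_filter_not P.support]
      exact P.as_sum
    have hPbI : Pb ∈ I := by
      rw [hPb_def]
      refine Ideal.sum_mem _ fun a ha => ?_
      have hbad : SR9.coneOf v a.support ∉ Δ := (Finset.mem_filter.mp ha).2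
      obtain ⟨u, hu⟩ := SR9.prod_X_dvd_monomial a.support a (coeff a P)
        (fun i hi => Finsupp.mem_support_iff.mp hi)
      rw [hu]
      exact Ideal.mul_mem_right _ _ (Ideal.subset_span ⟨a.support, hbad, rfl⟩)
    have hPgx : ∀ x, eval (fun i => t i x) Pg = 0 := by
      intro x
      have h1 := hPx x
      rw [hsplit, map_add, hker_rev Pb hPbI x, zero_add] at h1
      exact h1
    have hPg0 : Pg = 0 := by
      ext b
      rw [coeff_zero]
      by_cases hbmem : b ∈ P.support.filter (fun a => ¬ SR9.coneOf v a.support ∉ Δ)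
      · have hgb : SR9.coneOf v b.support ∈ Δ :=
          not_not.mp (Finset.mem_filter.mp hbmem).2
        have hmask0 : SR9.maskP b.support Pg = 0 := by
          refine SR9.eq_zero_of_orthant _ fun c hcnn => ?_
          rw [SR9.eval_maskP]
          set c' := SR9.maskF b.support c with hc'_def
          have hc'0 : ∀ i, 0 ≤ c' i := by
            intro i
            rw [hc'_def]
            simp only [SR9.maskF]
            split
            · exact hcnn i
            · exact le_refl 0
          have hc'z : ∀ i, i ∉ b.support → c' i = 0 := by
            intro i hi
            rw [hc'_def]
            simp only [SR9.maskF]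
            rw [if_neg hi]
          have htc : (fun j => t j (∑ i, c' i • v i)) = c' :=
            funext fun j => SR9.tval ht_lin ht_val hgb rfl hc'0 hc'z j
          calc eval c' Pg = eval (fun j => t j (∑ i, c' i • v i)) Pg := by rw [htc]
            _ = 0 := hPgx _
        have hcm := SR9.coeff_maskP b.support Pg b (Finset.Subset.refl _)
        rw [hmask0, coeff_zero] at hcm
        exact hcm.symm
      · rw [hPg_def, coeff_sum]
        refine Finset.sum_eq_zero fun a ha => ?_
        rw [coeff_monomial, if_neg]
        rintro rfl
        exact hbmem ha
    have : P = Pb := by rw [hsplit, hPg0, add_zero]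
    rw [this]
    exact hPbI
  refine ⟨part1, part2, fun P => ⟨?_, ?_⟩⟩
  · intro hP
    exact hker_fwd P fun x => congrFun hP x
  · intro hP
    funext x
    exact hker_rev P hP x
end

section
/- A minimal extension sheaf $\mathcal{E}$ on a fan $\Delta$ is flabby: for every subfan $\Lambda \preceq \Delta$, the restriction map $\mathcal{E}(\Delta) \to \mathcal{E}(\Lambda)$ is surjective. -/
open MvPolynomial

/-- The graded polynomial ring `A = ℚ[u₁,…,uₙ]` (linear forms in degree 2). -/
abbrev Aring (n : ℕ) := MvPolynomial (Fin n) ℚ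

/-- The homogeneous maximal ideal `𝔪 = A^{>0}`. -/
noncomputable def mIdeal (n : ℕ) : Ideal (Aring n) :=
  Ideal.span (Set.range MvPolynomial.X)

/-- The ideal of polynomial functions vanishing on the linear span `V_σ` of a
cone `σ`; the quotient `A/coneIdeal σ` is the ring `A_σ = S(V_σ^*)`. -/
noncomputable def coneIdeal {n : ℕ} (σ : Set (Fin n → ℚ)) : Ideal (Aring n) where
  carrier := {p | ∀ x ∈ Submodule.span ℚ σ, eval x p = 0}
  zero_mem' := by intro x _; simp
  add_mem' := by
    intro a b ha hb x hx
    simp [map_add, ha x hx, hb x hx]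
  smul_mem' := by
    intro c p hp x hx
    simp [smul_eq_mul, hp x hx]

/-- A sheaf of graded `𝒜`-modules on the fan space `Δ`, given by its stalks
`E σ` (the sections over the affine subfan `⟨σ⟩`) together with compatible
degree-preserving restriction maps; the grading is such that the action of a
homogeneous polynomial of degree `i` raises degrees by `2i`. -/
structure GSheaf (n : ℕ) (Δ : Set (Set (Fin n → ℚ))) where
  E : Set (Fin n → ℚ) → Type
  [acg : ∀ σ, AddCommGroup (E σ)]
  [modA : ∀ σ, Module (Aring n) (E σ)]
  [modQ : ∀ σ, Module ℚ (E σ)]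
  [tower : ∀ σ, IsScalarTower ℚ (Aring n) (E σ)]
  res : ∀ σ τ : Set (Fin n → ℚ), τ ⊆ σ → E σ →ₗ[Aring n] E τ
  res_self : ∀ σ (h : σ ⊆ σ), res σ σ h = LinearMap.id
  res_comp : ∀ σ τ υ (h1 : τ ⊆ σ) (h2 : υ ⊆ τ),
    (res τ υ h2).comp (res σ τ h1) = res σ υ (h2.trans h1)
  deg : ∀ σ, ℕ → Submodule ℚ (E σ)
  [decomp : ∀ σ, DirectSum.Decomposition (deg σ)]
  deg_smul : ∀ σ (i j : ℕ), ∀ p ∈ homogeneousSubmodule (Fin n) ℚ i, ∀ x ∈ deg σ j,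
    p • x ∈ deg σ (2 * i + j)
  res_deg : ∀ σ τ (h : τ ⊆ σ) (j : ℕ), ∀ x ∈ deg σ j, res σ τ h x ∈ deg τ j

attribute [instance] GSheaf.acg GSheaf.modA GSheaf.modQ GSheaf.tower GSheaf.decomp

variable {n : ℕ} {Δ : Set (Set (Fin n → ℚ))}

/-- The module of sections of the sheaf over a collection `Λ` of cones:
compatible families of stalk elements. -/
def GSheaf.Sect (S : GSheaf n Δ) (Λ : Set (Set (Fin n → ℚ))) :
    Submodule (Aring n) (∀ σ : Λ, S.E σ) where
  carrier := {x | ∀ (σ τ : Λ) (h : (τ : Set (Fin n → ℚ)) ⊆ σ), S.res σ τ h (x σ) = x τ}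
  zero_mem' := by intro σ τ h; simp
  add_mem' := by intro a b ha hb σ τ h; simp [ha σ τ h, hb σ τ h]
  smul_mem' := by intro c a ha σ τ h; simp [ha σ τ h]

/-- Restriction of sections to a smaller collection of cones. -/
def GSheaf.resSect (S : GSheaf n Δ) (Λ₁ Λ₂ : Set (Set (Fin n → ℚ))) (h : Λ₂ ⊆ Λ₁) :
    S.Sect Λ₁ →ₗ[Aring n] S.Sect Λ₂ where
  toFun x := ⟨fun σ => x.1 ⟨σ.1, h σ.2⟩,
    fun σ τ hh => x.2 ⟨σ.1, h σ.2⟩ ⟨τ.1, h τ.2⟩ hh⟩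
  map_add' x y := rfl
  map_smul' c x := rfl

/-- The boundary subfan `∂σ` of a cone `σ` in the fan `Δ`. -/
def bdry {n : ℕ} (Δ : Set (Set (Fin n → ℚ))) (σ : Set (Fin n → ℚ)) :
    Set (Set (Fin n → ℚ)) :=
  {τ | τ ∈ Δ ∧ τ ⊆ σ ∧ τ ≠ σ}

/-- The restriction map from the stalk at `σ` to the sections over `∂σ`. -/
noncomputable def GSheaf.toBoundary (S : GSheaf n Δ) (σ : Set (Fin n → ℚ)) :
    S.E σ →ₗ[Aring n] S.Sect (bdry Δ σ) where
  toFun x := ⟨fun τ => S.res σ τ τ.2.2.1 x, fun τ υ h => by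
    have := DFunLike.congr_fun (S.res_comp σ τ υ τ.2.2.1 h) x
    exact this⟩
  map_add' x y := Subtype.ext (funext fun τ => map_add _ x y)
  map_smul' c x := Subtype.ext (funext fun τ => map_smul _ c x)

/-- `S` is a minimal extension sheaf: it satisfies the normalization (N),
pointwise freeness (PF) and local minimal extension (LME) conditions. -/
def GSheaf.IsMES (S : GSheaf n Δ) : Prop :=
  -- (N) : `E(o) ≅ ℚ`, concentrated in degree 0
  (Nonempty (S.E ({0} : Set (Fin n → ℚ)) ≃ₗ[ℚ] ℚ) ∧
    S.deg ({0} : Set (Fin n → ℚ)) 0 = ⊤) ∧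
  -- (PF) : each `E(σ)` is a finitely generated free `A_σ = A/coneIdeal σ`-module
  (∀ σ ∈ Δ, (∀ p ∈ coneIdeal σ, ∀ x : S.E σ, p • x = 0) ∧
    ∃ (k : ℕ) (b : Fin k → S.E σ),
      Submodule.span (Aring n) (Set.range b) = ⊤ ∧
      ∀ c : Fin k → Aring n, ∑ i, c i • b i = 0 → ∀ i, c i ∈ coneIdeal σ) ∧
  -- (LME) : `E(σ) → E(∂σ)` becomes an isomorphism modulo `𝔪`
  (∀ σ ∈ Δ, σ ≠ ({0} : Set (Fin n → ℚ)) →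
    (∀ y : S.Sect (bdry Δ σ), ∃ x : S.E σ,
      y - S.toBoundary σ x ∈
        mIdeal n • (⊤ : Submodule (Aring n) (S.Sect (bdry Δ σ)))) ∧
    (∀ x : S.E σ,
      S.toBoundary σ x ∈ mIdeal n • (⊤ : Submodule (Aring n) (S.Sect (bdry Δ σ))) →
      x ∈ mIdeal n • (⊤ : Submodule (Aring n) (S.E σ))))

section Aux
variable {n : ℕ} {Δ : Set (Set (Fin n → ℚ))}

/-- The degree-`d` projection on a stalk. -/
noncomputable def pjE (S : GSheaf n Δ) (τ : Set (Fin n → ℚ)) (d : ℕ) : S.E τ →+ S.E τ where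
  toFun e := (DirectSum.decompose (S.deg τ) e d : S.E τ)
  map_zero' := by simp
  map_add' a b := by simp [DirectSum.decompose_add]

lemma pjE_mem (S : GSheaf n Δ) (τ : Set (Fin n → ℚ)) (d : ℕ) (e : S.E τ) :
    pjE S τ d e ∈ S.deg τ d := SetLike.coe_mem _

lemma pjE_of_mem_same (S : GSheaf n Δ) {τ : Set (Fin n → ℚ)} {d : ℕ} {e : S.E τ}
    (h : e ∈ S.deg τ d) : pjE S τ d e = e := DirectSum.decompose_of_mem_same _ h

lemma pjE_of_mem_ne (S : GSheaf n Δ) {τ : Set (Fin n → ℚ)} {j d : ℕ} {e : S.E τ}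
    (h : e ∈ S.deg τ j) (hne : j ≠ d) : pjE S τ d e = 0 :=
  DirectSum.decompose_of_mem_ne _ h hne

lemma pjE_support (S : GSheaf n Δ) (τ : Set (Fin n → ℚ)) (e : S.E τ) :
    ∃ t : Finset ℕ, (∀ d ∉ t, pjE S τ d e = 0) ∧ ∑ j ∈ t, pjE S τ j e = e := by
  classical
  refine ⟨DFinsupp.support (DirectSum.decompose (S.deg τ) e), fun d hd => ?_, ?_⟩
  · have := DFinsupp.notMem_support_iff.mp hd
    show ((DirectSum.decompose (S.deg τ) e d : S.deg τ d) : S.E τ) = 0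
    rw [this]; rfl
  · exact DirectSum.sum_support_decompose _ e

lemma pjE_sum (S : GSheaf n Δ) (τ : Set (Fin n → ℚ)) (t : Finset ℕ) (f : ℕ → S.E τ)
    (hf : ∀ j ∈ t, f j ∈ S.deg τ j) (d : ℕ) :
    pjE S τ d (∑ j ∈ t, f j) = if d ∈ t then f d else 0 := by
  classical
  rw [map_sum]
  rw [Finset.sum_congr rfl (fun j hj => show pjE S τ d (f j) = if j = d then f j else 0 from ?_)]
  · exact Finset.sum_ite_eq' t d f
  · by_cases h : j = d
    · subst h; rw [if_pos rfl]; exact pjE_of_mem_same S (hf _ hj)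
    · rw [if_neg h]; exact pjE_of_mem_ne S (hf j hj) h

lemma res_pjE (S : GSheaf n Δ) {τ υ : Set (Fin n → ℚ)} (h : υ ⊆ τ) (d : ℕ) (e : S.E τ) :
    S.res τ υ h (pjE S τ d e) = pjE S υ d (S.res τ υ h e) := by
  classical
  obtain ⟨t, ht0, hte⟩ := pjE_support S τ e
  conv_rhs => rw [← hte]
  rw [map_sum, pjE_sum S υ t _ (fun j hj => S.res_deg τ υ h j _ (pjE_mem S τ j e)) d]
  by_cases hd : d ∈ t
  · rw [if_pos hd]
  · rw [if_neg hd, ht0 d hd, map_zero]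

open MvPolynomial in
lemma pjE_smul_X (S : GSheaf n Δ) (τ : Set (Fin n → ℚ)) (i : Fin n) (d : ℕ) (e : S.E τ) :
    pjE S τ d ((X i : Aring n) • e)
      = if 2 ≤ d then (X i : Aring n) • pjE S τ (d - 2) e else 0 := by
  classical
  obtain ⟨t, ht0, hte⟩ := pjE_support S τ e
  conv_lhs => rw [← hte, Finset.smul_sum]
  have hmem : ∀ j ∈ t, (X i : Aring n) • pjE S τ j e ∈ S.deg τ (2 + j) := by
    intro j hj
    have := S.deg_smul τ 1 j (X i) ((mem_homogeneousSubmodule 1 _).mpr (isHomogeneous_X ℚ i))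
      _ (pjE_mem S τ j e)
    simpa using this
  rw [map_sum]
  rw [Finset.sum_congr rfl (fun j hj =>
    show pjE S τ d ((X i : Aring n) • pjE S τ j e)
        = if 2 + j = d then (X i : Aring n) • pjE S τ j e else 0 from ?_)]
  · by_cases hd : 2 ≤ d
    · rw [if_pos hd]
      have hiff : ∀ j, (2 + j = d) = (j = d - 2) := fun j => by
        apply propext; omega
      simp_rw [hiff]
      rw [Finset.sum_ite_eq' t (d - 2) (fun j => (X i : Aring n) • pjE S τ j e)]
      by_cases h2 : d - 2 ∈ t
      · rw [if_pos h2]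
      · rw [if_neg h2, ht0 _ h2, smul_zero]
    · rw [if_neg hd]
      apply Finset.sum_eq_zero
      intro j hj
      rw [if_neg (by omega)]
  · by_cases hjd : 2 + j = d
    · rw [if_pos hjd]; exact hjd ▸ pjE_of_mem_same S (hmem j hj)
    · rw [if_neg hjd]; exact pjE_of_mem_ne S (hmem j hj) hjd

end Aux
section Aux2
variable {n : ℕ} {Δ : Set (Set (Fin n → ℚ))}

/-- Degree-`d` projection on sections. -/
noncomputable def pjS (S : GSheaf n Δ) (Λb : Set (Set (Fin n → ℚ))) (d : ℕ) :
    S.Sect Λb →+ S.Sect Λb where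
  toFun y := ⟨fun τ => pjE S τ.1 d (y.1 τ), by
    intro τ υ h
    rw [res_pjE S h d (y.1 τ), y.2 τ υ h]⟩
  map_zero' := Subtype.ext (funext fun τ => map_zero _)
  map_add' a b := Subtype.ext (funext fun τ => map_add _ _ _)

lemma pjS_apply (S : GSheaf n Δ) (Λb : Set (Set (Fin n → ℚ))) (d : ℕ) (y : S.Sect Λb)
    (τ : Λb) : (pjS S Λb d y).1 τ = pjE S τ.1 d (y.1 τ) := rfl

lemma pjS_toBoundary (S : GSheaf n Δ) (σ : Set (Fin n → ℚ)) (d : ℕ) (x : S.E σ) :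
    pjS S (bdry Δ σ) d (S.toBoundary σ x) = S.toBoundary σ (pjE S σ d x) :=
  Subtype.ext (funext fun τ => (res_pjE S τ.2.2.1 d x).symm)

open MvPolynomial in
lemma pjS_smul_X (S : GSheaf n Δ) (Λb : Set (Set (Fin n → ℚ))) (i : Fin n) (d : ℕ)
    (m : S.Sect Λb) :
    pjS S Λb d ((X i : Aring n) • m)
      = if 2 ≤ d then (X i : Aring n) • pjS S Λb (d - 2) m else 0 := by
  apply Subtype.ext
  funext τ
  have h1 : ((X i : Aring n) • m).1 τ = (X i : Aring n) • (m.1 τ) := rfl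
  rw [pjS_apply, h1, pjE_smul_X]
  split_ifs with h
  · rfl
  · rfl

lemma pjS_of_homog (S : GSheaf n Δ) (Λb : Set (Set (Fin n → ℚ))) {d : ℕ} {y : S.Sect Λb}
    (h : ∀ τ : Λb, y.1 τ ∈ S.deg τ.1 d) : pjS S Λb d y = y :=
  Subtype.ext (funext fun τ => pjE_of_mem_same S (h τ))

lemma sect_sum_pjS (S : GSheaf n Δ) (Λb : Set (Set (Fin n → ℚ))) (hfin : Λb.Finite)
    (y : S.Sect Λb) : ∃ t : Finset ℕ, ∑ d ∈ t, pjS S Λb d y = y := by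
  classical
  haveI := hfin.fintype
  refine ⟨Finset.univ.biUnion fun τ : Λb =>
    DFinsupp.support (DirectSum.decompose (S.deg τ.1) (y.1 τ)), ?_⟩
  apply Subtype.ext
  rw [AddSubmonoidClass.coe_finset_sum]
  funext τ
  simp only [Finset.sum_apply]
  have hz : ∀ d ∈ (Finset.univ.biUnion fun τ : Λb =>
      DFinsupp.support (DirectSum.decompose (S.deg τ.1) (y.1 τ))),
      d ∉ DFinsupp.support (DirectSum.decompose (S.deg τ.1) (y.1 τ)) →
      ((pjS S Λb d y : ∀ υ : Λb, S.E υ.1) τ) = 0 := by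
    intro d _ hd
    have h0 := DFinsupp.notMem_support_iff.mp hd
    show ((DirectSum.decompose (S.deg τ.1) (y.1 τ) d : S.deg τ.1 d) : S.E τ.1) = 0
    rw [h0]; rfl
  rw [← Finset.sum_subset (Finset.subset_biUnion_of_mem _ (Finset.mem_univ τ)) hz]
  exact DirectSum.sum_support_decompose _ (y.1 τ)

end Aux2
section Aux3
open MvPolynomial
variable {n : ℕ} {Δ : Set (Set (Fin n → ℚ))}

lemma zero_mem_of_mem_fan (hΔ : IsFan Δ) {σ : Set (Fin n → ℚ)} (hσ : σ ∈ Δ) :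
    (0 : Fin n → ℚ) ∈ σ := by
  obtain ⟨m, v, hv⟩ := hΔ.pcone σ hσ
  rw [hv]
  exact ⟨0, fun i => le_refl 0, by simp⟩

lemma subset_of_isFaceOf {τ σ : Set (Fin n → ℚ)} (h : IsFaceOf τ σ) : τ ⊆ σ := by
  obtain ⟨ℓ, hℓ, rfl⟩ := h
  exact fun x hx => hx.1

lemma face_of_subset (hΔ : IsFan Δ) {τ σ : Set (Fin n → ℚ)} (hτ : τ ∈ Δ) (hσ : σ ∈ Δ)
    (h : τ ⊆ σ) : IsFaceOf τ σ := by
  have := hΔ.inter_face σ hσ τ hτ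
  rwa [Set.inter_eq_self_of_subset_right h] at this

/-- Multiplication by `X i` on sections, as a linear map. -/
noncomputable def xmul (S : GSheaf n Δ) (Λb : Set (Set (Fin n → ℚ))) (i : Fin n) :
    S.Sect Λb →ₗ[Aring n] S.Sect Λb where
  toFun m := (X i : Aring n) • m
  map_add' a b := smul_add _ a b
  map_smul' a m := smul_comm (X i : Aring n) a m

lemma mIdeal_smul_le (S : GSheaf n Δ) (Λb : Set (Set (Fin n → ℚ))) :
    mIdeal n • (⊤ : Submodule (Aring n) (S.Sect Λb)) ≤
      ⨆ i : Fin n, LinearMap.range (xmul S Λb i) := by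
  rw [Submodule.smul_le]
  intro r hr m _
  induction hr using Submodule.span_induction with
  | mem p hp =>
    obtain ⟨i, rfl⟩ := hp
    exact le_iSup (fun i => LinearMap.range (xmul S Λb i)) i ⟨m, rfl⟩
  | zero => simpa using Submodule.zero_mem _
  | add p q hp hq ihp ihq =>
    rw [add_smul]
    exact Submodule.add_mem _ ihp ihq
  | smul a p hp ihp =>
    rw [smul_eq_mul, mul_smul]
    exact Submodule.smul_mem _ a ihp

lemma toBoundary_surjective (hΔ : IsFan Δ) (S : GSheaf n Δ) (hS : S.IsMES)
    {σ : Set (Fin n → ℚ)} (hσ : σ ∈ Δ) : Function.Surjective (S.toBoundary σ) := by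
  classical
  by_cases hσ0 : σ = ({0} : Set (Fin n → ℚ))
  · subst hσ0
    intro y
    refine ⟨0, Subtype.ext (funext fun τ => absurd τ.2 ?_)⟩
    rintro ⟨hτΔ, hsub, hne⟩
    exact hne (subset_antisymm hsub (by
      intro x hx
      rcases hx with rfl
      exact zero_mem_of_mem_fan hΔ hτΔ))
  · have hLME := (hS.2.2 σ hσ hσ0).1
    have hBfin : (bdry Δ σ).Finite := hΔ.finite.subset (fun τ hτ => hτ.1)
    set N := LinearMap.range (S.toBoundary σ) with hN
    suffices hall : ∀ d : ℕ, ∀ y : S.Sect (bdry Δ σ),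
        (∀ τ : bdry Δ σ, y.1 τ ∈ S.deg τ.1 d) → y ∈ N by
      intro y
      obtain ⟨t, ht⟩ := sect_sum_pjS S (bdry Δ σ) hBfin y
      have hyN : y ∈ N := by
        rw [← ht]
        exact Submodule.sum_mem N (fun d _ =>
          hall d (pjS S (bdry Δ σ) d y) (fun τ => pjE_mem S τ.1 d (y.1 τ)))
      exact hyN
    intro d
    induction d using Nat.strong_induction_on with
    | _ d IH =>
      intro y hy
      obtain ⟨x₀, hx₀⟩ := hLME y
      set z := y - S.toBoundary σ x₀ with hzdef
      have hzK : z ∈ ⨆ i : Fin n, LinearMap.range (xmul S (bdry Δ σ) i) :=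
        mIdeal_smul_le S (bdry Δ σ) hx₀
      have hz : pjS S (bdry Δ σ) d z ∈ N := by
        refine Submodule.iSup_induction (motive := fun w => pjS S (bdry Δ σ) d w ∈ N)
          _ hzK ?_ ?_ ?_
        · rintro i w ⟨m, rfl⟩
          show pjS S (bdry Δ σ) d ((X i : Aring n) • m) ∈ N
          rw [pjS_smul_X]
          split_ifs with h2
          · refine Submodule.smul_mem N _ ?_
            exact IH (d - 2) (by omega) (pjS S (bdry Δ σ) (d - 2) m)
              (fun τ => pjE_mem S τ.1 (d - 2) (m.1 τ))
          · exact N.zero_mem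
        · show pjS S (bdry Δ σ) d 0 ∈ N
          rw [map_zero]; exact N.zero_mem
        · intro a b ha hb
          rw [map_add]; exact N.add_mem ha hb
      have hyd : pjS S (bdry Δ σ) d y = y := pjS_of_homog S (bdry Δ σ) hy
      have hsplit : y = S.toBoundary σ (pjE S σ d x₀) + pjS S (bdry Δ σ) d z := by
        have h1 : y = S.toBoundary σ x₀ + z := by rw [hzdef]; abel
        calc y = pjS S (bdry Δ σ) d y := hyd.symm
        _ = pjS S (bdry Δ σ) d (S.toBoundary σ x₀ + z) := by rw [← h1]
        _ = pjS S (bdry Δ σ) d (S.toBoundary σ x₀) + pjS S (bdry Δ σ) d z := map_add _ _ _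
        _ = S.toBoundary σ (pjE S σ d x₀) + pjS S (bdry Δ σ) d z := by
            rw [pjS_toBoundary]
      rw [hsplit]
      exact N.add_mem (LinearMap.mem_range_self _ _) hz

end Aux3
section Aux4
variable {n : ℕ} {Δ : Set (Set (Fin n → ℚ))}

lemma extend_step (hΔ : IsFan Δ) (S : GSheaf n Δ) (hS : S.IsMES)
    {Λ : Set (Set (Fin n → ℚ))} {σ : Set (Fin n → ℚ)} (hΛ : IsSubfan Λ Δ) (hσΔ : σ ∈ Δ) (hσΛ : σ ∉ Λ)
    (hmin : ∀ τ ∈ Δ \ Λ, τ ⊆ σ → τ = σ) (y : S.Sect Λ) :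
    ∃ y' : S.Sect (insert σ Λ),
      S.resSect (insert σ Λ) Λ (Set.subset_insert σ Λ) y' = y := by
  classical
  have hBΛ : bdry Δ σ ⊆ Λ := by
    intro τ hτ
    by_contra hn
    exact hτ.2.2 (hmin τ ⟨hτ.1, hn⟩ hτ.2.1)
  obtain ⟨x, hx⟩ := toBoundary_surjective hΔ S hS hσΔ (S.resSect Λ (bdry Δ σ) hBΛ y)
  let g : ∀ υ : Set (Fin n → ℚ), S.E υ := fun υ =>
    if h : υ ∈ Λ then y.1 ⟨υ, h⟩ else if h2 : σ = υ then h2 ▸ x else 0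
  have hgΛ : ∀ υ (h : υ ∈ Λ), g υ = y.1 ⟨υ, h⟩ := fun υ h => dif_pos h
  have hgσ : g σ = x := by
    show (if h : σ ∈ Λ then y.1 ⟨σ, h⟩ else if h2 : σ = σ then h2 ▸ x else 0) = x
    rw [dif_neg hσΛ, dif_pos rfl]
  refine ⟨⟨fun τ => g τ.1, ?_⟩, ?_⟩
  · rintro ⟨τv, hτm⟩ ⟨υv, hυm⟩ hsub
    show S.res τv υv hsub (g τv) = g υv
    by_cases hτ : τv ∈ Λ
    · by_cases hυ : υv ∈ Λ
      · rw [hgΛ _ hτ, hgΛ _ hυ]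
        exact y.2 ⟨τv, hτ⟩ ⟨υv, hυ⟩ hsub
      · exfalso
        have hυσ : υv = σ := (Set.mem_insert_iff.mp hυm).resolve_right hυ
        subst hυσ
        exact hσΛ (hΛ.2 τv hτ υv (face_of_subset hΔ hσΔ (hΛ.1 hτ) hsub))
    · have hτσ : τv = σ := (Set.mem_insert_iff.mp hτm).resolve_right hτ
      subst hτσ
      by_cases hυ : υv ∈ Λ
      · have hne : υv ≠ τv := fun h => hσΛ (h ▸ hυ)
        have hb : υv ∈ bdry Δ τv := ⟨hΛ.1 hυ, hsub, hne⟩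
        rw [hgΛ _ hυ, hgσ]
        have := congrFun (congrArg Subtype.val hx) ⟨υv, hb⟩
        exact this
      · have hυσ : υv = τv := (Set.mem_insert_iff.mp hυm).resolve_right hυ
        subst hυσ
        rw [S.res_self υv hsub]
        rfl
  · exact Subtype.ext (funext fun τ => hgΛ τ.1 τ.2)

end Aux4

/-- A minimal extension sheaf is flabby: the restriction map from global
sections over `Δ` to sections over any subfan `Λ` is surjective. -/
theorem stmt_11 (n : ℕ) (Δ : Set (Set (Fin n → ℚ))) (hΔ : IsFan Δ)
    (h0 : ({0} : Set (Fin n → ℚ)) ∈ Δ)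
    (S : GSheaf n Δ) (hS : S.IsMES)
    (Λ : Set (Set (Fin n → ℚ))) (hΛ : IsSubfan Λ Δ) :
    Function.Surjective (S.resSect Δ Λ hΛ.1) := by
  classical
  have key : ∀ (k : ℕ) (Λ : Set (Set (Fin n → ℚ))), IsSubfan Λ Δ → (Δ \ Λ).ncard ≤ k →
      ∀ (h : Λ ⊆ Δ), Function.Surjective (S.resSect Δ Λ h) := by
    intro k
    induction k with
    | zero =>
      intro Λ hΛ hcard h
      have hfin : (Δ \ Λ).Finite := hΔ.finite.subset Set.diff_subset
      have hempty : Δ \ Λ = ∅ := by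
        rw [← Set.ncard_eq_zero hfin]
        omega
      have hEq : Λ = Δ := subset_antisymm h (fun σ hσ => by
        by_contra hn
        exact (Set.eq_empty_iff_forall_notMem.mp hempty σ) ⟨hσ, hn⟩)
      subst hEq
      exact fun y => ⟨y, rfl⟩
    | succ k IH =>
      intro Λ hΛ hcard h
      by_cases hk : (Δ \ Λ).ncard ≤ k
      · exact IH Λ hΛ hk h
      · have hfin : (Δ \ Λ).Finite := hΔ.finite.subset Set.diff_subset
        have hne : (Δ \ Λ).Nonempty := by
          rw [Set.nonempty_iff_ne_empty]
          intro he
          rw [he] at hk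
          simp at hk
        obtain ⟨σ, hσ, hminw⟩ := Set.Finite.exists_minimal hfin hne
        have hmin : ∀ τ ∈ Δ \ Λ, τ ⊆ σ → τ = σ := fun τ hτ hsub => subset_antisymm hsub (hminw hτ hsub)
        have hΛ' : IsSubfan (insert σ Λ) Δ := by
          constructor
          · exact Set.insert_subset hσ.1 hΛ.1
          · intro τ hτ υ hface
            rcases Set.mem_insert_iff.mp hτ with hτσ | hτΛ
            · subst hτσ
              have hυΔ : υ ∈ Δ := hΔ.face_mem τ hσ.1 υ hface
              have hυτ : υ ⊆ τ := subset_of_isFaceOf hface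
              by_cases hυΛ : υ ∈ Λ
              · exact Set.mem_insert_of_mem _ hυΛ
              · exact (hmin υ ⟨hυΔ, hυΛ⟩ hυτ) ▸ Set.mem_insert _ _
            · exact Set.mem_insert_of_mem _ (hΛ.2 τ hτΛ υ hface)
        have hcard' : (Δ \ insert σ Λ).ncard ≤ k := by
          have hdiff : Δ \ insert σ Λ = (Δ \ Λ) \ {σ} := by
            ext τ
            simp only [Set.mem_diff, Set.mem_insert_iff, Set.mem_singleton_iff]
            tauto
          rw [hdiff, Set.ncard_diff_singleton_of_mem hσ]
          omega
        intro y
        obtain ⟨y', hy'⟩ := extend_step hΔ S hS hΛ hσ.1 hσ.2 hmin y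
        obtain ⟨w, hw⟩ := IH (insert σ Λ) hΛ' hcard' hΛ'.1 y'
        refine ⟨w, ?_⟩
        have hcomp : S.resSect Δ Λ h w
            = S.resSect (insert σ Λ) Λ (Set.subset_insert σ Λ)
              (S.resSect Δ (insert σ Λ) hΛ'.1 w) := rfl
        rw [hcomp, hw, hy']
  exact key (Δ \ Λ).ncard Λ hΛ le_rfl hΛ.1
end

section
/- A minimal extension sheaf $\mathcal{E}$ on a fan $\Delta$ vanishes in odd degrees: $\mathcal{E}^{2q+1}(\Lambda) = 0$ for all subfans $\Lambda$ and all $q \geq 0$. -/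
open MvPolynomial

variable {n : ℕ} {Δ : Set (Set (Fin n → ℚ))}

/-- A minimal extension sheaf vanishes in odd degrees: every section over a
subfan `Λ` all of whose components are homogeneous of degree `2q+1` is zero. -/
theorem stmt_12 (n : ℕ) (Δ : Set (Set (Fin n → ℚ))) (hΔ : IsFan Δ)
    (h0 : ({0} : Set (Fin n → ℚ)) ∈ Δ)
    (S : GSheaf n Δ) (hS : S.IsMES)
    (Λ : Set (Set (Fin n → ℚ))) (hΛ : IsSubfan Λ Δ)
    (q : ℕ) (x : S.Sect Λ)
    (hx : ∀ τ : Λ, x.1 τ ∈ S.deg τ (2 * q + 1)) :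
    x = 0 := by
  classical
  have key : ∀ q : ℕ, ∀ σ ∈ Δ, ∀ v ∈ S.deg σ (2 * q + 1), v = 0 := by
    intro q
    induction q using Nat.strong_induction_on with
    | _ q IHq =>
    have wf : Δ.WellFoundedOn (· < ·) := hΔ.finite.wellFoundedOn
    have main : ∀ σ ∈ Δ, ∀ v ∈ S.deg σ (2 * q + 1), v = 0 := by
      intro σ₀ hσ₀
      refine Set.WellFoundedOn.induction (P := fun σ => ∀ v ∈ S.deg σ (2 * q + 1), v = 0) wf hσ₀ ?_
      intro σ hσ IH v hv
      by_cases hzero : σ = ({0} : Set (Fin n → ℚ))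
      · -- zero cone: everything in degree 0
        obtain ⟨⟨-, htop⟩, -, -⟩ := hS
        have htop' : S.deg σ 0 = ⊤ := by rw [hzero]; exact htop
        have h1 : ((DirectSum.decompose (S.deg σ) v) 0 : S.E σ) = v :=
          DirectSum.decompose_of_mem_same _ (htop' ▸ Submodule.mem_top)
        have h2 : ((DirectSum.decompose (S.deg σ) v) 0 : S.E σ) = 0 :=
          DirectSum.decompose_of_mem_ne _ hv (by omega)
        rw [← h1, h2]
      · -- nonzero cone: use LME
        have hb : S.toBoundary σ v = 0 := by
          apply Subtype.ext; funext τ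
          show S.res σ τ.1 τ.2.2.1 v = 0
          have hmem : S.res σ τ.1 τ.2.2.1 v ∈ S.deg τ.1 (2 * q + 1) :=
            S.res_deg σ τ.1 τ.2.2.1 _ v hv
          have hss : τ.1 < σ := HasSubset.Subset.ssubset_of_ne τ.2.2.1 τ.2.2.2
          exact IH τ.1 τ.2.1 hss _ hmem
        have hvmem : v ∈ mIdeal n • (⊤ : Submodule (Aring n) (S.E σ)) := by
          refine (hS.2.2 σ hσ hzero).2 v ?_
          rw [hb]; exact Submodule.zero_mem _
        -- projection argument
        set Q : S.E σ → Prop :=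
          fun w => ((DirectSum.decompose (S.deg σ) w) (2 * q + 1) : S.E σ) = 0 with hQ
        have hQzero : Q 0 := by
          simp [hQ]
        have hQadd : ∀ a b : S.E σ, Q a → Q b → Q (a + b) := by
          intro a b ha hb
          simp only [hQ, DirectSum.decompose_add, DirectSum.add_apply,
            Submodule.coe_add] at *
          rw [ha, hb, add_zero]
        have hQv : Q v := by
          refine Submodule.smul_induction_on hvmem ?_ hQadd
          intro r hr w _
          have hr0 : MvPolynomial.coeff 0 r = 0 := by
            have hle : mIdeal n ≤ RingHom.ker (MvPolynomial.constantCoeff (R := ℚ)) := by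
              rw [mIdeal, Ideal.span_le]
              rintro _ ⟨i, rfl⟩
              simp [RingHom.mem_ker]
            have := hle hr
            rwa [RingHom.mem_ker, MvPolynomial.constantCoeff_eq] at this
          have hsplit : r • w = ∑ i ∈ Finset.range (r.totalDegree + 1),
              MvPolynomial.homogeneousComponent i r • w := by
            rw [← Finset.sum_smul, MvPolynomial.sum_homogeneousComponent]
          rw [hsplit]
          refine Finset.sum_induction _ Q hQadd hQzero ?_
          intro i _
          rcases Nat.eq_zero_or_pos i with hi0 | hipos
          · subst hi0
            rw [MvPolynomial.homogeneousComponent_zero, hr0, map_zero, zero_smul]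
            exact hQzero
          · have hsplit2 : MvPolynomial.homogeneousComponent i r • w =
                ∑ j ∈ (DirectSum.decompose (S.deg σ) w).support,
                  MvPolynomial.homogeneousComponent i r •
                    ((DirectSum.decompose (S.deg σ) w) j : S.E σ) := by
              rw [← Finset.smul_sum, DirectSum.sum_support_decompose]
            rw [hsplit2]
            refine Finset.sum_induction _ Q hQadd hQzero ?_
            intro j _
            have hwj : ((DirectSum.decompose (S.deg σ) w) j : S.E σ) ∈ S.deg σ j :=
              SetLike.coe_mem _
            by_cases hij : 2 * i + j = 2 * q + 1
            · -- the piece itself is zero by induction on q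
              have hodd : ∃ q' : ℕ, q' < q ∧ j = 2 * q' + 1 := by
                refine ⟨(j - 1) / 2, by omega, by omega⟩
              obtain ⟨q', hq', rfl⟩ := hodd
              have : ((DirectSum.decompose (S.deg σ) w) (2 * q' + 1) : S.E σ) = 0 :=
                IHq q' hq' σ hσ _ hwj
              rw [this, smul_zero]
              exact hQzero
            · -- the piece lives in a different degree
              have hhom : MvPolynomial.homogeneousComponent i r ∈
                  homogeneousSubmodule (Fin n) ℚ i :=
                (MvPolynomial.mem_homogeneousSubmodule _ _).mpr
                  (MvPolynomial.homogeneousComponent_isHomogeneous i r)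
              have hmem2 : MvPolynomial.homogeneousComponent i r •
                  ((DirectSum.decompose (S.deg σ) w) j : S.E σ) ∈ S.deg σ (2 * i + j) :=
                S.deg_smul σ i j _ hhom _ hwj
              exact DirectSum.decompose_of_mem_ne _ hmem2 hij
        have := DirectSum.decompose_of_mem_same (S.deg σ) hv
        rw [← this, hQv]
    exact main
  have hall : ∀ τ : Λ, x.1 τ = 0 := fun τ => key q τ.1 (hΛ.1 τ.2) _ (hx τ)
  apply Subtype.ext
  funext τ
  rw [hall τ]
  rfl
end

section
/- Let $\Delta$ be a fan in $\mathbb{Q}^n$ and $\sigma \in \Delta$ a maximal cone of dimension $d < n$. Then the module $\mathcal{E}(\Delta)$ of global sections of a minimal extension sheaf on $\Delta$ has a nonzero torsion element over $A = S(V^*)$: there exists a nonzero section $s \in \mathcal{E}(\Delta)$ supported on $\sigma$ (i.e., restricting to zero on $\Delta\setminus\{\sigma\}$) that is annihilated by every linear form in $A^2$ vanishing on $V_\sigma$. -/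
open MvPolynomial

variable {n : ℕ} {Δ : Set (Set (Fin n → ℚ))}

/-! ### Auxiliary lemmas -/

lemma mem_coneIdeal {σ : Set (Fin n → ℚ)} {p : Aring n} :
    p ∈ coneIdeal σ ↔ ∀ x ∈ Submodule.span ℚ σ, eval x p = 0 := Iff.rfl

lemma zero_mem_of_pcone {σ : Set (Fin n → ℚ)} (h : IsPCone σ) : (0 : Fin n → ℚ) ∈ σ := by
  obtain ⟨m, v, rfl⟩ := h
  exact ⟨0, fun i => le_refl 0, by simp⟩

lemma one_notMem_coneIdeal (σ : Set (Fin n → ℚ)) : (1 : Aring n) ∉ coneIdeal σ := by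
  intro hcon
  have := hcon 0 (Submodule.zero_mem _)
  simp at this

/-- The degree-2 polynomial (linear form) associated to a linear functional. -/
noncomputable def linToPoly (ℓ : (Fin n → ℚ) →ₗ[ℚ] ℚ) : Aring n :=
  ∑ i, C (ℓ (Pi.single i 1)) * X i

lemma eval_linToPoly (ℓ : (Fin n → ℚ) →ₗ[ℚ] ℚ) (x : Fin n → ℚ) :
    eval x (linToPoly ℓ) = ℓ x := by
  have hx : x = ∑ i, x i • (Pi.single i (1 : ℚ) : Fin n → ℚ) := by
    funext j
    simp [Finset.sum_apply, Pi.single_apply]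
  rw [linToPoly, map_sum]
  conv_rhs => rw [hx]
  rw [map_sum]
  simp [mul_comm]

lemma coneIdeal_mul_notMem {σ : Set (Fin n → ℚ)} {p q : Aring n}
    (hp : p ∉ coneIdeal σ) (hq : q ∉ coneIdeal σ) : p * q ∉ coneIdeal σ := by
  simp only [mem_coneIdeal, not_forall] at hp hq ⊢
  obtain ⟨a, ha, hpa⟩ := hp
  obtain ⟨b, hb, hqb⟩ := hq
  set g : Fin n → Polynomial ℚ :=
    fun i => Polynomial.C (a i) + Polynomial.C (b i - a i) * Polynomial.X with hg
  set φ : Aring n →+* Polynomial ℚ := eval₂Hom Polynomial.C g with hφ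
  have key : ∀ (t : ℚ) (r : Aring n),
      Polynomial.eval t (φ r) = eval (fun i => a i + t * (b i - a i)) r := by
    intro t r
    show (Polynomial.evalRingHom t) (eval₂ Polynomial.C g r) = _
    rw [eval₂_comp_left]
    rw [show (Polynomial.evalRingHom t).comp (Polynomial.C : ℚ →+* Polynomial ℚ)
        = RingHom.id ℚ by ext c; simp]
    rw [show ((Polynomial.evalRingHom t) ∘ g) = fun i => a i + t * (b i - a i) by
      funext i; simp [hg]; ring]
    rfl
  have hφp : Polynomial.eval 0 (φ p) = eval a p := by
    rw [key 0 p]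
    have h0 : (fun i => a i + 0 * (b i - a i)) = a := by funext i; ring
    rw [h0]
  have hφq : Polynomial.eval 1 (φ q) = eval b q := by
    rw [key 1 q]
    have h1 : (fun i => a i + 1 * (b i - a i)) = b := by funext i; ring
    rw [h1]
  have hne : φ (p * q) ≠ 0 := by
    rw [map_mul]
    exact mul_ne_zero (fun h => hpa (by rw [← hφp, h, Polynomial.eval_zero]))
      (fun h => hqb (by rw [← hφq, h, Polynomial.eval_zero]))
  obtain ⟨t, ht⟩ : ∃ t : ℚ, Polynomial.eval t (φ (p * q)) ≠ 0 := by
    by_contra hcon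
    push_neg at hcon
    exact hne (Polynomial.zero_of_eval_zero _ hcon)
  refine ⟨fun i => a i + t * (b i - a i), ?_, ?_⟩
  · have hrw : (fun i => a i + t * (b i - a i)) = (1 - t) • a + t • b := by
      funext i
      simp only [Pi.add_apply, Pi.smul_apply, smul_eq_mul]
      ring
    rw [hrw]
    exact Submodule.add_mem _ (Submodule.smul_mem _ _ ha) (Submodule.smul_mem _ _ hb)
  · rw [← key t (p * q)]; exact ht

/-- The degree-0 projection on a stalk. -/
noncomputable def proj0L (S : GSheaf n Δ) (υ : Set (Fin n → ℚ)) : S.E υ →ₗ[ℚ] S.E υ :=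
  (S.deg υ 0).subtype ∘ₗ (DFinsupp.lapply 0) ∘ₗ
    (DirectSum.decomposeLinearEquiv (S.deg υ)).toLinearMap

lemma proj0L_apply (S : GSheaf n Δ) (υ : Set (Fin n → ℚ)) (v : S.E υ) :
    proj0L S υ v = (DirectSum.decompose (S.deg υ) v 0 : S.E υ) := rfl

lemma proj0L_smul_eq_zero (S : GSheaf n Δ) (υ : Set (Fin n → ℚ)) (aP : Aring n)
    (ha : constantCoeff aP = 0) (v : S.E υ) : proj0L S υ (aP • v) = 0 := by
  classical
  have hv := DirectSum.sum_support_decompose (S.deg υ) v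
  have ha' := MvPolynomial.sum_homogeneousComponent aP
  rw [← ha', ← hv, Finset.sum_smul, map_sum]
  refine Finset.sum_eq_zero fun i _ => ?_
  rw [Finset.smul_sum, map_sum]
  refine Finset.sum_eq_zero fun j _ => ?_
  rcases eq_or_ne i 0 with rfl | hi0
  · rw [homogeneousComponent_zero]
    have : coeff 0 aP = 0 := ha
    rw [this, map_zero, zero_smul, map_zero]
  · have hmem := S.deg_smul υ i j (homogeneousComponent i aP)
      ((mem_homogeneousSubmodule _ _).2 (homogeneousComponent_isHomogeneous i aP))
      _ (SetLike.coe_mem (DirectSum.decompose (S.deg υ) v j))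
    rw [proj0L_apply]
    rw [DirectSum.decompose_of_mem_ne (S.deg υ) hmem (by omega : 2 * i + j ≠ 0)]

lemma res_proj0 (S : GSheaf n Δ) (σ τ : Set (Fin n → ℚ)) (h : τ ⊆ σ) (x : S.E σ) :
    S.res σ τ h (proj0L S σ x) = proj0L S τ (S.res σ τ h x) := by
  classical
  conv_rhs => rw [← DirectSum.sum_support_decompose (S.deg σ) x]
  rw [map_sum, map_sum]
  rw [Finset.sum_eq_single 0]
  · rw [proj0L_apply, proj0L_apply]
    exact (DirectSum.decompose_of_mem_same _
      (S.res_deg σ τ h 0 _ (SetLike.coe_mem _))).symm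
  · intro j _ hj0
    rw [proj0L_apply]
    exact DirectSum.decompose_of_mem_ne (S.deg τ)
      (S.res_deg σ τ h j _ (SetLike.coe_mem _)) hj0
  · intro h0
    rw [DFinsupp.notMem_support_iff.1 h0]
    simp

lemma mIdeal_smul_proj0 (S : GSheaf n Δ) (Λ : Set (Set (Fin n → ℚ)))
    (z : S.Sect Λ) (hz : z ∈ mIdeal n • (⊤ : Submodule (Aring n) (S.Sect Λ))) :
    ∀ τ : Λ, proj0L S τ.1 (z.1 τ) = 0 := by
  refine Submodule.smul_induction_on hz ?_ ?_
  · intro r hr w _ τ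
    have hr0 : constantCoeff r = 0 := by
      have hle : mIdeal n ≤ RingHom.ker (constantCoeff : Aring n →+* ℚ) := by
        rw [mIdeal, Ideal.span_le]
        rintro _ ⟨i, rfl⟩
        simp [RingHom.mem_ker]
      simpa [RingHom.mem_ker] using hle hr
    have hcoe : ((r • w : S.Sect Λ) : ∀ σ : Λ, S.E σ) τ = r • (w.1 τ) := rfl
    rw [hcoe]
    exact proj0L_smul_eq_zero S _ r hr0 _
  · intro a b ha hb τ
    have hcoe : ((a + b : S.Sect Λ) : ∀ σ : Λ, S.E σ) τ = a.1 τ + b.1 τ := rfl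
    rw [hcoe, map_add, ha τ, hb τ, add_zero]

/-- Key extension lemma: over any boundary-closed subcollection of the fan
containing the zero cone, there is a degree-zero section taking any prescribed
value at the zero cone. -/
lemma exists_deg0_section (hΔ : IsFan Δ) (S : GSheaf n Δ) (hS : S.IsMES)
    (e : S.E ({0} : Set (Fin n → ℚ))) (he : e ∈ S.deg ({0} : Set (Fin n → ℚ)) 0) :
    ∀ (k : ℕ) (Λ : Set (Set (Fin n → ℚ))), Λ ⊆ Δ → Λ.ncard ≤ k →
      ({0} : Set (Fin n → ℚ)) ∈ Λ →
      (∀ τ ∈ Λ, ∀ υ ∈ bdry Δ τ, υ ∈ Λ) →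
      ∃ y : S.Sect Λ, (∀ τ : Λ, y.1 τ ∈ S.deg τ.1 0) ∧
        ∀ (hm : ({0} : Set (Fin n → ℚ)) ∈ Λ), y.1 ⟨{0}, hm⟩ = e := by
  classical
  intro k
  induction k with
  | zero =>
    intro Λ hsub hcard h0Λ _
    exfalso
    have hfin : Λ.Finite := hΔ.finite.subset hsub
    have := (Set.ncard_pos hfin).2 ⟨_, h0Λ⟩
    omega
  | succ k ih =>
    intro Λ hsub hcard h0Λ hcl
    have hfin : Λ.Finite := hΔ.finite.subset hsub
    by_cases hall : ∀ τ ∈ Λ, τ = ({0} : Set (Fin n → ℚ))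
    · refine ⟨⟨fun τ => S.res {0} τ.1 (hall τ.1 τ.2).subset e, ?_⟩, ?_, ?_⟩
      · intro a b hab
        exact DFunLike.congr_fun (S.res_comp {0} a.1 b.1 (hall a.1 a.2).subset hab) e
      · intro τ
        exact S.res_deg {0} τ.1 _ 0 e he
      · intro hm
        show S.res {0} {0} _ e = e
        rw [S.res_self]
        rfl
    · push_neg at hall
      obtain ⟨τex, hτexΛ, hτexne⟩ := hall
      obtain ⟨σ', hσ'Λ, hσ'max⟩ := Set.Finite.exists_maximalFor id Λ hfin ⟨_, h0Λ⟩
      simp only [id] at hσ'max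
      have hσ'max' : ∀ a ∈ Λ, σ' ⊆ a → σ' = a :=
        fun a ha h => le_antisymm h (hσ'max ha h)
      have hσ'ne : σ' ≠ ({0} : Set (Fin n → ℚ)) := by
        rintro rfl
        have h0τ : (0 : Fin n → ℚ) ∈ τex := zero_mem_of_pcone (hΔ.pcone _ (hsub hτexΛ))
        have hsub0 : ({0} : Set (Fin n → ℚ)) ⊆ τex := by
          intro z hz
          rw [Set.mem_singleton_iff] at hz
          rw [hz]; exact h0τ
        exact hτexne (hσ'max' τex hτexΛ hsub0).symm
      have hsub' : (Λ \ {σ'}) ⊆ Δ := Set.Subset.trans Set.diff_subset hsub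
      have hcard' : (Λ \ {σ'}).ncard ≤ k := by
        have := Set.ncard_diff_singleton_lt_of_mem hσ'Λ hfin
        omega
      have h0Λ' : ({0} : Set (Fin n → ℚ)) ∈ Λ \ {σ'} :=
        ⟨h0Λ, fun hm => hσ'ne (Set.mem_singleton_iff.1 hm).symm⟩
      have hcl' : ∀ τ ∈ Λ \ {σ'}, ∀ υ ∈ bdry Δ τ, υ ∈ Λ \ {σ'} := by
        intro τ hτ υ hυ
        refine ⟨hcl τ hτ.1 υ hυ, ?_⟩
        intro hmem
        rw [Set.mem_singleton_iff] at hmem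
        subst hmem
        exact hυ.2.2 (hσ'max' τ hτ.1 hυ.2.1)
      obtain ⟨y', hdeg', hval'⟩ := ih (Λ \ {σ'}) hsub' hcard' h0Λ' hcl'
      have hbsub : bdry Δ σ' ⊆ Λ \ {σ'} := by
        intro τ hτ
        exact ⟨hcl σ' hσ'Λ τ hτ, fun hm => hτ.2.2 (Set.mem_singleton_iff.1 hm)⟩
      obtain ⟨x, hx⟩ :=
        (hS.2.2 σ' (hsub hσ'Λ) hσ'ne).1 (S.resSect (Λ \ {σ'}) (bdry Δ σ') hbsub y')
      set x₀ := proj0L S σ' x with hx₀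
      have hx₀deg : x₀ ∈ S.deg σ' 0 := by
        rw [hx₀, proj0L_apply]
        exact SetLike.coe_mem _
      have hzcomp := mIdeal_smul_proj0 S (bdry Δ σ') _ hx
      have hres : ∀ (τ : Set (Fin n → ℚ)) (hτ : τ ∈ bdry Δ σ'),
          S.res σ' τ hτ.2.1 x₀ = y'.1 ⟨τ, hbsub hτ⟩ := by
        intro τ hτ
        have h1 := hzcomp ⟨τ, hτ⟩
        have h2 : ((S.resSect (Λ \ {σ'}) (bdry Δ σ') hbsub y' -
            S.toBoundary σ' x : S.Sect (bdry Δ σ')).1 ⟨τ, hτ⟩)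
            = y'.1 ⟨τ, hbsub hτ⟩ - S.res σ' τ hτ.2.1 x := rfl
        rw [h2, map_sub] at h1
        have h3 : proj0L S τ (y'.1 ⟨τ, hbsub hτ⟩) = y'.1 ⟨τ, hbsub hτ⟩ := by
          rw [proj0L_apply]
          exact DirectSum.decompose_of_mem_same _ (hdeg' ⟨τ, hbsub hτ⟩)
        have h4 : proj0L S τ (S.res σ' τ hτ.2.1 x) = S.res σ' τ hτ.2.1 x₀ :=
          (res_proj0 S σ' τ hτ.2.1 x).symm
        rw [h3, h4] at h1
        exact (sub_eq_zero.mp h1).symm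
      refine ⟨⟨fun τ => if hτ : τ.1 = σ' then S.res σ' τ.1 hτ.subset x₀
          else y'.1 ⟨τ.1, ⟨τ.2, fun hm => hτ (Set.mem_singleton_iff.1 hm)⟩⟩, ?_⟩, ?_, ?_⟩
      · intro a b hab
        dsimp only
        by_cases ha : a.1 = σ'
        · rw [dif_pos ha]
          by_cases hb : b.1 = σ'
          · rw [dif_pos hb]
            exact DFunLike.congr_fun (S.res_comp σ' a.1 b.1 ha.subset hab) x₀
          · rw [dif_neg hb]
            have hbd : b.1 ∈ bdry Δ σ' := ⟨hsub b.2, hab.trans ha.subset, hb⟩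
            have h6 := DFunLike.congr_fun (S.res_comp σ' a.1 b.1 ha.subset hab) x₀
            rw [LinearMap.comp_apply] at h6
            rw [h6]
            exact hres b.1 hbd
        · rw [dif_neg ha]
          by_cases hb : b.1 = σ'
          · exact absurd (hσ'max' a.1 a.2 (hb.symm.subset.trans hab)).symm ha
          · rw [dif_neg hb]
            exact y'.2 ⟨a.1, _⟩ ⟨b.1, _⟩ hab
      · intro τ
        dsimp only
        by_cases hτ : τ.1 = σ'
        · rw [dif_pos hτ]
          exact S.res_deg σ' τ.1 hτ.subset 0 x₀ hx₀deg
        · rw [dif_neg hτ]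
          exact hdeg' ⟨τ.1, ⟨τ.2, fun hm => hτ (Set.mem_singleton_iff.1 hm)⟩⟩
      · intro hm
        dsimp only
        rw [dif_neg (Ne.symm hσ'ne)]
        exact hval' _

/-- If a fan `Δ` in `ℚⁿ` has a maximal cone `σ` of dimension `d < n`, then the
global sections of a minimal extension sheaf on `Δ` contain a nonzero torsion
element: a nonzero section supported on `σ` (vanishing on all other cones)
which is annihilated by every linear form in `A²` vanishing on `V_σ`. -/
theorem stmt_18 (n d : ℕ) (Δ : Set (Set (Fin n → ℚ))) (hΔ : IsFan Δ)
    (h0 : ({0} : Set (Fin n → ℚ)) ∈ Δ)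
    (S : GSheaf n Δ) (hS : S.IsMES)
    (σ : Set (Fin n → ℚ)) (hσ : σ ∈ Δ)
    (hmax : ∀ τ ∈ Δ, σ ⊆ τ → τ = σ)
    (hdim : Module.finrank ℚ (Submodule.span ℚ σ) = d) (hdn : d < n) :
    ∃ s : S.Sect Δ, s ≠ 0 ∧
      (∀ τ : Δ, (τ : Set (Fin n → ℚ)) ≠ σ → s.1 τ = 0) ∧
      ∀ ℓ ∈ homogeneousSubmodule (Fin n) ℚ 1,
        (∀ x ∈ Submodule.span ℚ σ, eval x ℓ = 0) → ℓ • s = 0 := by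
  classical
  -- a nonzero degree-zero element of `E({0})`
  obtain ⟨eqv⟩ := hS.1.1
  set e : S.E ({0} : Set (Fin n → ℚ)) := eqv.symm 1 with he_def
  have he : e ∈ S.deg ({0} : Set (Fin n → ℚ)) 0 := by
    rw [hS.1.2]; trivial
  have he0 : e ≠ 0 := by
    intro hcon
    have h1 : eqv e = 1 := eqv.apply_symm_apply 1
    rw [hcon, map_zero] at h1
    exact zero_ne_one h1
  -- a global degree-zero section with value `e` at the zero cone
  obtain ⟨y, hdeg, hval⟩ := exists_deg0_section hΔ S hS e he Δ.ncard Δ subset_rfl le_rfl h0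
    (fun τ _ υ hυ => hυ.1)
  set x₀g : S.E σ := y.1 ⟨σ, hσ⟩ with hx₀g_def
  have h0σ : ({0} : Set (Fin n → ℚ)) ⊆ σ := by
    intro z hz
    rw [Set.mem_singleton_iff] at hz
    rw [hz]
    exact zero_mem_of_pcone (hΔ.pcone σ hσ)
  have hx₀g : x₀g ≠ 0 := by
    intro hcon
    have h5 := y.2 ⟨σ, hσ⟩ ⟨{0}, h0⟩ h0σ
    rw [hval h0] at h5
    rw [← hx₀g_def, hcon, map_zero] at h5
    exact he0 h5.symm
  -- supporting linear forms for the boundary faces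
  have BFin : (bdry Δ σ).Finite := hΔ.finite.subset fun τ hτ => hτ.1
  set B := BFin.toFinset with hB
  have hLex : ∀ τ ∈ bdry Δ σ, ∃ Lp : Aring n, Lp ∈ coneIdeal τ ∧ Lp ∉ coneIdeal σ := by
    intro τ hτ
    have hface : IsFaceOf (σ ∩ τ) σ := hΔ.inter_face σ hσ τ hτ.1
    rw [Set.inter_eq_right.mpr hτ.2.1] at hface
    obtain ⟨ℓ, _, hτeq⟩ := hface
    refine ⟨linToPoly ℓ, ?_, ?_⟩
    · intro xx hxx
      rw [eval_linToPoly]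
      have hker : Submodule.span ℚ τ ≤ LinearMap.ker ℓ := by
        rw [Submodule.span_le]
        intro t ht
        rw [hτeq] at ht
        exact LinearMap.mem_ker.2 ht.2
      exact LinearMap.mem_ker.1 (hker hxx)
    · intro hcon
      have hvan : ∀ t ∈ σ, ℓ t = 0 := by
        intro t ht
        have := hcon t (Submodule.subset_span ht)
        rwa [eval_linToPoly] at this
      apply hτ.2.2
      rw [hτeq]
      ext z
      exact ⟨fun hz => hz.1, fun hz => ⟨hz, hvan z hz⟩⟩
  set L : Set (Fin n → ℚ) → Aring n :=
    fun τ => if hτ : τ ∈ bdry Δ σ then (hLex τ hτ).choose else 1 with hL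
  have hL1 : ∀ τ ∈ bdry Δ σ, L τ ∈ coneIdeal τ := by
    intro τ hτ
    rw [hL]
    simp only [dif_pos hτ]
    exact (hLex τ hτ).choose_spec.1
  have hL2 : ∀ τ, L τ ∉ coneIdeal σ := by
    intro τ
    rw [hL]
    by_cases hτ : τ ∈ bdry Δ σ
    · simp only [dif_pos hτ]
      exact (hLex τ hτ).choose_spec.2
    · simp only [dif_neg hτ]
      exact one_notMem_coneIdeal σ
  set hbig : Aring n := ∏ τ ∈ B, L τ with hhbig
  have hbignot : hbig ∉ coneIdeal σ :=
    Finset.prod_induction L (· ∉ coneIdeal σ)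
      (fun a b hA hB => coneIdeal_mul_notMem hA hB) (one_notMem_coneIdeal σ)
      (fun τ _ => hL2 τ)
  set xσ : S.E σ := hbig • x₀g with hxσ_def
  -- `xσ` is nonzero by freeness
  have hxσne : xσ ≠ 0 := by
    obtain ⟨htor, kk, bb, hspan, hfree⟩ := hS.2.1 σ hσ
    intro hcon
    have hmem : x₀g ∈ Submodule.span (Aring n) (Set.range bb) := by
      rw [hspan]; trivial
    obtain ⟨c, hc⟩ := (Submodule.mem_span_range_iff_exists_fun _).1 hmem
    have hsum : ∑ i, (hbig * c i) • bb i = 0 := by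
      calc ∑ i, (hbig * c i) • bb i = hbig • ∑ i, c i • bb i := by
            rw [Finset.smul_sum]
            exact Finset.sum_congr rfl fun i _ => by rw [mul_smul]
        _ = 0 := by rw [hc, ← hxσ_def]; exact hcon
    have hcI := hfree _ hsum
    have hciI : ∀ i, c i ∈ coneIdeal σ := by
      intro i
      by_contra hci
      exact coneIdeal_mul_notMem hbignot hci (hcI i)
    apply hx₀g
    rw [← hc]
    exact Finset.sum_eq_zero fun i _ => htor (c i) (hciI i) (bb i)
  -- the section supported on `σ`
  have smem : (fun τ : Δ => if hτ : (τ : Set (Fin n → ℚ)) = σ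
      then S.res σ τ.1 hτ.subset xσ else 0) ∈ S.Sect Δ := by
    intro a b hab
    dsimp only
    by_cases ha : a.1 = σ
    · rw [dif_pos ha]
      by_cases hb : b.1 = σ
      · rw [dif_pos hb]
        exact DFunLike.congr_fun (S.res_comp σ a.1 b.1 ha.subset hab) xσ
      · rw [dif_neg hb]
        have hbd : b.1 ∈ bdry Δ σ := ⟨b.2, hab.trans ha.subset, hb⟩
        have h6 := DFunLike.congr_fun (S.res_comp σ a.1 b.1 ha.subset hab) xσ
        rw [LinearMap.comp_apply] at h6
        rw [h6, hxσ_def, map_smul]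
        have hsplit : hbig = (∏ τ ∈ B.erase b.1, L τ) * L b.1 := by
          rw [mul_comm]
          rw [Finset.mul_prod_erase _ _ (BFin.mem_toFinset.2 hbd)]
        rw [hsplit, mul_smul]
        rw [(hS.2.1 b.1 b.2).1 (L b.1) (hL1 b.1 hbd)
          (S.res σ b.1 (hab.trans ha.subset) x₀g), smul_zero]
    · rw [dif_neg ha]
      by_cases hb : b.1 = σ
      · exact absurd (hmax a.1 a.2 (hb.symm.subset.trans hab)) ha
      · rw [dif_neg hb, map_zero]
  refine ⟨⟨_, smem⟩, ?_, ?_, ?_⟩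
  · intro hcon
    have h8 : (if hτ : σ = σ then S.res σ σ hτ.subset xσ else 0) = xσ := by
      rw [dif_pos rfl, S.res_self]
      rfl
    apply hxσne
    rw [← h8]
    have h9 := congrArg (fun w : S.Sect Δ => w.1 ⟨σ, hσ⟩) hcon
    exact h9
  · intro τ hτ
    exact dif_neg hτ
  · intro ℓ hℓ1 hℓvan
    have hℓI : ℓ ∈ coneIdeal σ := hℓvan
    apply Subtype.ext
    funext τ
    show ℓ • (if hτ : τ.1 = σ then S.res σ τ.1 hτ.subset xσ else 0) = 0
    by_cases hτ : τ.1 = σ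
    · rw [dif_pos hτ]
      exact (hS.2.1 τ.1 τ.2).1 ℓ (by rw [hτ]; exact hℓI) _
    · rw [dif_neg hτ, smul_zero]
end
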